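/- arXiv:math/0008100 — 5 statements merged into one kernel-verified Lean document; each statement's English description precedes it below -/
import Mathlib

section
/- Let 1 ≤ k ≤ n. Any collection of pairwise weakly separated k-element subsets of {1,…,n} has cardinality at most k(n−k) + 1. -/
/-- `X ≺ Y`: every element of `X` is less than every element of `Y`. -/
def Prec (X Y : Finset ℕ) : Prop := ∀ x ∈ X, ∀ y ∈ Y, x < y

/-- Two finite subsets `I, J` of `{1,…,n}` are weakly separated: either
`|I| ≥ |J|` and `J∖I` is partitioned as `J₁ ⊔ J₂` with `J₁ ≺ I∖J ≺ J₂`, or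
symmetrically with `I` and `J` interchanged. -/
def WeaklySeparated (I J : Finset ℕ) : Prop :=
  (J.card ≤ I.card ∧ ∃ J₁ J₂ : Finset ℕ, Disjoint J₁ J₂ ∧ J₁ ∪ J₂ = J \ I ∧
      Prec J₁ (I \ J) ∧ Prec (I \ J) J₂) ∨
  (I.card ≤ J.card ∧ ∃ I₁ I₂ : Finset ℕ, Disjoint I₁ I₂ ∧ I₁ ∪ I₂ = I \ J ∧
      Prec I₁ (J \ I) ∧ Prec (J \ I) I₂)

/-
Induct on the ground set `S`, removing its largest element `m`, while letting the sizes of the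
sets range over an interval `[a, k]`. Erasing `m` from every set keeps the family pairwise weakly
separated, and `I ↦ I \ {m}` is injective except on pairs `X`, `X ∪ {m}` that both lie in the
family. Two such `X` of the same size coincide: weak separation of `X ∪ {m}` from `Y` forces
`Y \ X ≺ X \ Y` because `m` lies above everything, and symmetrically. So erasing `m` merges at
most one pair per size, which yields `|C| ≤ 1 + ∑_{j<k} (|S| - max a j)`; for `S = {1,…,n}` and
`a = k` this is `k(n-k) + 1`.
-/

open Finset

namespace WeaklySeparated

theorem of_prec_sdiff {I J : Finset ℕ} (h : Prec (I \ J) (J \ I)) : WeaklySeparated I J := by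
  rcases le_total J.card I.card with hc | hc
  · exact Or.inl ⟨hc, ∅, J \ I, disjoint_empty_left _, empty_union _,
      fun _ hx => absurd hx (notMem_empty _), h⟩
  · exact Or.inr ⟨hc, I \ J, ∅, disjoint_empty_right _, union_empty _, h,
      fun _ _ _ hy => absurd hy (notMem_empty _)⟩

theorem erase {I J : Finset ℕ} {m : ℕ} (hI : m ∈ I) (hJ : m ∈ J) (h : WeaklySeparated I J) :
    WeaklySeparated (I.erase m) (J.erase m) := by
  have hJI : J.erase m \ I.erase m = J \ I := by
    rw [← erase_sdiff_distrib, erase_eq_of_notMem fun h => (mem_sdiff.1 h).2 hI]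
  have hIJ : I.erase m \ J.erase m = I \ J := by
    rw [← erase_sdiff_distrib, erase_eq_of_notMem fun h => (mem_sdiff.1 h).2 hJ]
  rw [WeaklySeparated, hJI, hIJ, card_erase_of_mem hI, card_erase_of_mem hJ]
  rcases h with ⟨hc, h⟩ | ⟨hc, h⟩
  · exact Or.inl ⟨Nat.sub_le_sub_right hc 1, h⟩
  · exact Or.inr ⟨Nat.sub_le_sub_right hc 1, h⟩

/-- `m` lies above all of `I`, so the upper part `I₂` of the splitting is empty. -/
theorem prec_sdiff_of_split_insert {I J I₁ I₂ : Finset ℕ} {m : ℕ} (hI : ∀ x ∈ I, x < m)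
    (hu : I₁ ∪ I₂ = I \ insert m J) (h₁ : Prec I₁ (insert m J \ I))
    (h₂ : Prec (insert m J \ I) I₂) : Prec (I \ J) (J \ I) := by
  have hmI : m ∉ I := fun h => lt_irrefl m (hI m h)
  rw [sdiff_insert_of_notMem hmI] at hu
  rw [insert_sdiff_of_notMem _ hmI] at h₁ h₂
  intro x hx y hy
  rcases mem_union.1 (hu ▸ hx) with hx₁ | hx₂
  · exact h₁ x hx₁ y (mem_insert_of_mem hy)
  · exact absurd (h₂ m (mem_insert_self m _) x hx₂) (hI x (mem_sdiff.1 hx).1).asymm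

theorem prec_sdiff_of_insert_right {I J : Finset ℕ} {m : ℕ} (hI : ∀ x ∈ I, x < m) (hmJ : m ∉ J)
    (hc : I.card ≤ J.card) (h : WeaklySeparated I (insert m J)) : Prec (I \ J) (J \ I) := by
  rcases h with ⟨hc', -⟩ | ⟨-, I₁, I₂, -, hu, h₁, h₂⟩
  · rw [card_insert_of_notMem hmJ] at hc'
    omega
  · exact prec_sdiff_of_split_insert hI hu h₁ h₂

theorem of_insert_right {I J : Finset ℕ} {m : ℕ} (hI : ∀ x ∈ I, x < m) (hmJ : m ∉ J)
    (h : WeaklySeparated I (insert m J)) : WeaklySeparated I J := by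
  have hmI : m ∉ I := fun h => lt_irrefl m (hI m h)
  rcases h with ⟨hc, J₁, J₂, hd, hu, h₁, h₂⟩ | ⟨-, I₁, I₂, -, hu, h₁, h₂⟩
  · rw [card_insert_of_notMem hmJ] at hc
    rw [insert_sdiff_of_notMem _ hmI] at hu
    rw [sdiff_insert_of_notMem hmI] at h₁ h₂
    obtain ⟨x, hxI, hxJ⟩ := exists_mem_notMem_of_card_lt_card (Nat.lt_of_succ_le hc)
    have hmJ₁ : m ∉ J₁ := fun hm =>
      (hI x hxI).asymm (h₁ m hm x (mem_sdiff.2 ⟨hxI, hxJ⟩))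
    refine Or.inl ⟨hc.trans' (Nat.le_succ _), J₁, J₂.erase m,
      hd.mono_right (erase_subset _ _), ?_, h₁, fun x hx y hy => h₂ x hx y (mem_of_mem_erase hy)⟩
    rw [← erase_eq_of_notMem hmJ₁, ← erase_union_distrib, hu,
      erase_insert fun h => hmJ (mem_sdiff.1 h).1]
  · exact of_prec_sdiff (prec_sdiff_of_split_insert hI hu h₁ h₂)

theorem erase_of_le {I J : Finset ℕ} {m : ℕ} (hI : ∀ x ∈ I, x ≤ m) (hJ : ∀ x ∈ J, x ≤ m)
    (h : WeaklySeparated I J) : WeaklySeparated (I.erase m) (J.erase m) := by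
  have lt_of_notMem {K : Finset ℕ} (hK : ∀ x ∈ K, x ≤ m) (hmK : m ∉ K) : ∀ x ∈ K, x < m :=
    fun x hx => (hK x hx).lt_of_ne fun hxm => hmK (hxm ▸ hx)
  by_cases hmI : m ∈ I <;> by_cases hmJ : m ∈ J
  · exact h.erase hmI hmJ
  · rw [erase_eq_of_notMem hmJ]
    rw [← insert_erase hmI] at h
    exact (of_insert_right (lt_of_notMem hJ hmJ) (notMem_erase m I) h.symm).symm
  · rw [erase_eq_of_notMem hmI]
    rw [← insert_erase hmJ] at h
    exact of_insert_right (lt_of_notMem hI hmI) (notMem_erase m J) h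
  · rwa [erase_eq_of_notMem hmI, erase_eq_of_notMem hmJ]

theorem eq_of_insert_of_card_eq {X Y : Finset ℕ} {m : ℕ} (hX : ∀ x ∈ X, x < m)
    (hY : ∀ y ∈ Y, y < m) (hc : X.card = Y.card) (hXY : WeaklySeparated (insert m X) Y)
    (hYX : WeaklySeparated (insert m Y) X) : X = Y := by
  have hmX : m ∉ X := fun h => lt_irrefl m (hX m h)
  have hmY : m ∉ Y := fun h => lt_irrefl m (hY m h)
  have hXY' := prec_sdiff_of_insert_right hX hmY hc.le hYX.symm
  have hYX' := prec_sdiff_of_insert_right hY hmX hc.ge hXY.symm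
  rcases (X \ Y).eq_empty_or_nonempty with hXY'' | ⟨x, hx⟩
  · exact eq_of_subset_of_card_le (sdiff_eq_empty_iff_subset.1 hXY'') hc.ge
  rcases (Y \ X).eq_empty_or_nonempty with hYX'' | ⟨y, hy⟩
  · exact (eq_of_subset_of_card_le (sdiff_eq_empty_iff_subset.1 hYX'') hc.le).symm
  exact absurd (hXY' x hx y hy) (hYX' y hy x hx).asymm

end WeaklySeparated

theorem card_eq_card_image_erase_add_card_filter {α : Type*} [DecidableEq α]
    (C : Finset (Finset α)) (m : α) :
    C.card = (C.image (·.erase m)).card + (C.filter fun X => m ∉ X ∧ insert m X ∈ C).card := by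
  set C₀ := C.filter (m ∉ ·)
  set C₁ := C.filter (m ∈ ·)
  have hC₁ : (C₁.image (·.erase m)).card = C₁.card :=
    card_image_of_injOn fun X hX Y hY => erase_injOn' m (mem_filter.1 hX).2 (mem_filter.1 hY).2
  have himage : C.image (·.erase m) = C₀ ∪ C₁.image (·.erase m) := by
    ext X
    simp only [mem_image, mem_union, mem_filter, C₀, C₁]
    grind [erase_eq_of_notMem, notMem_erase]
  have hinter : C.filter (fun X => m ∉ X ∧ insert m X ∈ C) = C₀ ∩ C₁.image (·.erase m) := by
    ext X
    simp only [mem_filter, mem_inter, mem_image, C₀, C₁]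
    constructor
    · rintro ⟨hX, hmX, hmXC⟩
      exact ⟨⟨hX, hmX⟩, insert m X, ⟨hmXC, mem_insert_self m X⟩, erase_insert hmX⟩
    · rintro ⟨⟨hX, hmX⟩, Y, ⟨hY, hmY⟩, rfl⟩
      exact ⟨hX, hmX, (insert_erase hmY).symm ▸ hY⟩
  rw [himage, hinter, card_union_add_card_inter, hC₁]
  rw [add_comm]
  exact (card_filter_add_card_filter_not (m ∈ ·)).symm

theorem card_filter_insert_mem_le {S : Finset ℕ} {m a k : ℕ} (hS : ∀ x ∈ S, x < m)
    {C : Finset (Finset ℕ)} (hsub : ∀ I ∈ C, I ⊆ insert m S)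
    (hcard : ∀ I ∈ C, a ≤ I.card ∧ I.card ≤ k) (hws : ∀ I ∈ C, ∀ J ∈ C, WeaklySeparated I J) :
    (C.filter fun X => m ∉ X ∧ insert m X ∈ C).card ≤ min k (S.card + 1) - a := by
  have hsubS : ∀ X ∈ C.filter (fun X => m ∉ X ∧ insert m X ∈ C), X ⊆ S := fun X hX =>
    (subset_insert_iff_of_notMem (mem_filter.1 hX).2.1).1 (hsub X (mem_filter.1 hX).1)
  calc _ ≤ (Ico a (min k (S.card + 1))).card := by
        refine card_le_card_of_injOn card (fun X hX => ?_) fun X hX Y hY hXY => ?_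
        · obtain ⟨hXC, hmX, hmXC⟩ := mem_filter.1 hX
          have hX_le_S := card_le_card (hsubS X hX)
          have hinsert_le_k := (hcard _ hmXC).2
          rw [card_insert_of_notMem hmX] at hinsert_le_k
          rw [mem_coe, mem_Ico, lt_min_iff]
          exact ⟨(hcard X hXC).1, hinsert_le_k, Nat.lt_succ_of_le hX_le_S⟩
        · obtain ⟨hXC, -, hmXC⟩ := mem_filter.1 hX
          obtain ⟨hYC, -, hmYC⟩ := mem_filter.1 hY
          exact WeaklySeparated.eq_of_insert_of_card_eq (fun x hx => hS x (hsubS X hX hx))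
            (fun y hy => hS y (hsubS Y hY hy)) hXY (hws _ hmXC _ hYC) (hws _ hmYC _ hXC)
    _ = min k (S.card + 1) - a := Nat.card_Ico _ _

theorem sum_range_sub_max_succ (s a k : ℕ) :
    ∑ j ∈ range k, (s + 1 - max a j)
      = (min k (s + 1) - a) + ∑ j ∈ range k, (s - max (a - 1) j) := by
  have hterm : ∀ j ∈ range k,
      s + 1 - max a j = (s - max (a - 1) j) + if j ∈ Ico a (min k (s + 1)) then 1 else 0 := by
    intro j hj
    rw [mem_range] at hj
    simp only [mem_Ico, lt_min_iff]
    split_ifs <;> omega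
  have hIco : Ico a (min k (s + 1)) ⊆ range k := fun j hj => by
    rw [mem_Ico, lt_min_iff] at hj
    exact mem_range.2 hj.2.1
  rw [sum_congr rfl hterm, sum_add_distrib, ← card_filter, filter_mem_eq_inter,
    inter_eq_right.2 hIco, Nat.card_Ico, add_comm]

theorem card_le_one_add_sum_of_pairwise_weaklySeparated (S : Finset ℕ) (a k : ℕ)
    (C : Finset (Finset ℕ)) (hsub : ∀ I ∈ C, I ⊆ S) (hcard : ∀ I ∈ C, a ≤ I.card ∧ I.card ≤ k)
    (hws : ∀ I ∈ C, ∀ J ∈ C, WeaklySeparated I J) :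
    C.card ≤ 1 + ∑ j ∈ range k, (S.card - max a j) := by
  induction S using Finset.induction_on_max generalizing a C with
  | empty =>
    have hC : C.card ≤ 1 := card_le_one.2 fun I hI J hJ => by
      rw [subset_empty.1 (hsub I hI), subset_empty.1 (hsub J hJ)]
    exact hC.trans (Nat.le_add_right _ _)
  | insert m S hS ih =>
    have hle : ∀ I ∈ C, ∀ x ∈ I, x ≤ m := fun I hI x hx =>
      (mem_insert.1 (hsub I hI hx)).elim le_of_eq fun h => (hS x h).le
    have hD := ih (a - 1) (C.image (·.erase m))
      (forall_mem_image.2 fun I hI => subset_insert_iff.1 (hsub I hI))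
      (forall_mem_image.2 fun I hI => ⟨(Nat.sub_le_sub_right (hcard I hI).1 1).trans
        pred_card_le_card_erase, card_erase_le.trans (hcard I hI).2⟩)
      (forall_mem_image.2 fun I hI => forall_mem_image.2 fun J hJ =>
        (hws I hI J hJ).erase_of_le (hle I hI) (hle J hJ))
    rw [card_insert_of_notMem fun h => lt_irrefl m (hS m h), sum_range_sub_max_succ,
      card_eq_card_image_erase_add_card_filter C m]
    have hO := card_filter_insert_mem_le hS hsub hcard hws
    omega

theorem card_le_of_pairwise_weaklySeparated_general (n k : ℕ)
    (𝒞 : Finset (Finset ℕ))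
    (hsub : ∀ I ∈ 𝒞, I ⊆ Finset.Icc 1 n) (hcard : ∀ I ∈ 𝒞, I.card = k)
    (hws : ∀ I ∈ 𝒞, ∀ J ∈ 𝒞, WeaklySeparated I J) :
    𝒞.card ≤ k * (n - k) + 1 := by
  have hbound := card_le_one_add_sum_of_pairwise_weaklySeparated (Icc 1 n) k k 𝒞 hsub
    (fun I hI => ⟨(hcard I hI).ge, (hcard I hI).le⟩) hws
  have hsum : ∑ j ∈ range k, ((Icc 1 n).card - max k j) = k * (n - k) := by
    rw [Nat.card_Icc, add_tsub_cancel_right,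
      sum_congr rfl fun j hj => by rw [max_eq_left (mem_range.1 hj).le], sum_const, card_range,
      smul_eq_mul]
  omega

/-- Any collection of pairwise weakly separated `k`-element subsets of `{1,…,n}`
has cardinality at most `k(n−k) + 1`. -/
theorem card_le_of_pairwise_weaklySeparated (n k : ℕ) (hk : 1 ≤ k) (hkn : k ≤ n)
    (𝒞 : Finset (Finset ℕ))
    (hsub : ∀ I ∈ 𝒞, I ⊆ Finset.Icc 1 n) (hcard : ∀ I ∈ 𝒞, I.card = k)
    (hws : ∀ I ∈ 𝒞, ∀ J ∈ 𝒞, WeaklySeparated I J) :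
    𝒞.card ≤ k * (n - k) + 1 :=
  card_le_of_pairwise_weaklySeparated_general n k 𝒞 hsub hcard hws
end

section
/- Let 1 ≤ k ≤ n. There exists a collection of pairwise weakly separated k-element subsets of {1,…,n} of cardinality exactly k(n−k) + 1. -/
lemma ws_symm {I J : Finset ℕ} (h : WeaklySeparated I J) : WeaklySeparated J I :=
  Or.symm h

/-- Key lemma: two "prefix ∪ interval" sets are weakly separated. -/
lemma ws_aux (a b e a' b' e' : ℕ) (haa : a ≤ a')
    (hcard : (Finset.Icc 1 a' ∪ Finset.Icc b' e').card ≤ (Finset.Icc 1 a ∪ Finset.Icc b e).card) :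
    WeaklySeparated (Finset.Icc 1 a ∪ Finset.Icc b e) (Finset.Icc 1 a' ∪ Finset.Icc b' e') := by
  set I := Finset.Icc 1 a ∪ Finset.Icc b e with hI
  set J := Finset.Icc 1 a' ∪ Finset.Icc b' e' with hJ
  left
  refine ⟨hcard, (J \ I).filter (fun x => x < b), (J \ I).filter (fun x => b ≤ x), ?_, ?_, ?_, ?_⟩
  · rw [Finset.disjoint_left]
    intro x hx hx'
    simp only [Finset.mem_filter] at hx hx'
    omega
  · ext x
    simp only [Finset.mem_union, Finset.mem_filter]
    constructor
    · rintro (⟨h, _⟩ | ⟨h, _⟩) <;> exact h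
    · intro h
      rcases Nat.lt_or_ge x b with hb | hb
      · exact Or.inl ⟨h, hb⟩
      · exact Or.inr ⟨h, hb⟩
  · intro x hx y hy
    simp only [Finset.mem_filter, Finset.mem_sdiff, hI, hJ, Finset.mem_union,
      Finset.mem_Icc] at hx hy
    omega
  · intro x hx y hy
    simp only [Finset.mem_filter, Finset.mem_sdiff, hI, hJ, Finset.mem_union,
      Finset.mem_Icc] at hx hy
    omega

lemma card_prefix_interval (k a t : ℕ) (ha : a ≤ k) :
    (Finset.Icc 1 a ∪ Finset.Icc (a + t + 2) (t + k + 1)).card = k := by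
  rw [Finset.card_union_of_disjoint, Nat.card_Icc, Nat.card_Icc]
  · omega
  · rw [Finset.disjoint_left]
    intro x hx hx'
    simp only [Finset.mem_Icc] at hx hx'
    omega

/-- There exists a collection of pairwise weakly separated `k`-element subsets of
`{1,…,n}` of cardinality exactly `k(n−k) + 1`. -/
theorem exists_pairwise_weaklySeparated_card_eq (n k : ℕ) (hk : 1 ≤ k) (hkn : k ≤ n) :
    ∃ 𝒞 : Finset (Finset ℕ),
      (∀ I ∈ 𝒞, I ⊆ Finset.Icc 1 n) ∧ (∀ I ∈ 𝒞, I.card = k) ∧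
      (∀ I ∈ 𝒞, ∀ J ∈ 𝒞, WeaklySeparated I J) ∧
      𝒞.card = k * (n - k) + 1 := by
  classical
  set F : ℕ × ℕ → Finset ℕ :=
    fun p => Finset.Icc 1 p.1 ∪ Finset.Icc (p.1 + p.2 + 2) (p.2 + k + 1) with hF
  set S : Finset (ℕ × ℕ) := insert (k, 0) ((Finset.range k) ×ˢ (Finset.range (n - k))) with hS
  have hmemS : ∀ p ∈ S, p.1 ≤ k ∧ (p.1 < k → p.2 < n - k) ∧ (p.1 = k → p = (k, 0)) := by
    intro p hp
    rw [hS, Finset.mem_insert, Finset.mem_product, Finset.mem_range, Finset.mem_range] at hp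
    rcases hp with h | h
    · subst h; exact ⟨le_rfl, by omega, fun _ => rfl⟩
    · exact ⟨le_of_lt h.1, fun _ => h.2, fun hh => absurd hh (by omega)⟩
  have hmemF : ∀ (p : ℕ × ℕ) (x : ℕ),
      x ∈ F p ↔ ((1 ≤ x ∧ x ≤ p.1) ∨ (p.1 + p.2 + 2 ≤ x ∧ x ≤ p.2 + k + 1)) := by
    intro p x
    simp [hF, Finset.mem_union, Finset.mem_Icc]
  have hinj : Set.InjOn F ↑S := by
    intro p hp q hq hpq
    have h1 := hmemS p hp
    have h2 := hmemS q hq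
    have hfst : p.1 = q.1 := by
      by_contra hne
      rcases Nat.lt_or_ge p.1 q.1 with h | h
      · have hxq : p.1 + 1 ∈ F q := by rw [hmemF]; left; omega
        rw [← hpq, hmemF] at hxq; omega
      · have hlt : q.1 < p.1 := by omega
        have hxp : q.1 + 1 ∈ F p := by rw [hmemF]; left; omega
        rw [hpq, hmemF] at hxp; omega
    rcases Nat.lt_or_ge p.1 k with hlt | hge
    · -- p.1 = q.1 < k, show snd equal
      have hb1 : p.1 + p.2 + 2 ∈ F p := by rw [hmemF]; right; omega
      rw [hpq, hmemF] at hb1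
      have hb2 : q.1 + q.2 + 2 ∈ F q := by rw [hmemF]; right; omega
      rw [← hpq, hmemF] at hb2
      have hsnd : p.2 = q.2 := by omega
      exact Prod.ext hfst hsnd
    · have hpk : p.1 = k := by omega
      have hqk : q.1 = k := by omega
      rw [h1.2.2 hpk, h2.2.2 hqk]
  refine ⟨S.image F, ?_, ?_, ?_, ?_⟩
  · intro I hI
    obtain ⟨p, hp, rfl⟩ := Finset.mem_image.mp hI
    intro x hx
    rw [hmemF] at hx
    have h1 := hmemS p hp
    rw [Finset.mem_Icc]
    rcases Nat.lt_or_ge p.1 k with hlt | hge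
    · have := h1.2.1 hlt; omega
    · have hpk : p.1 = k := by omega
      have := h1.2.2 hpk
      rw [this] at hx
      simp at hx
      omega
  · intro I hI
    obtain ⟨p, hp, rfl⟩ := Finset.mem_image.mp hI
    exact card_prefix_interval k p.1 p.2 (hmemS p hp).1
  · intro I hI J hJ
    obtain ⟨p, hp, rfl⟩ := Finset.mem_image.mp hI
    obtain ⟨q, hq, rfl⟩ := Finset.mem_image.mp hJ
    have hcp : (F p).card = k := card_prefix_interval k p.1 p.2 (hmemS p hp).1
    have hcq : (F q).card = k := card_prefix_interval k q.1 q.2 (hmemS q hq).1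
    rcases le_or_gt p.1 q.1 with h | h
    · exact ws_aux p.1 (p.1 + p.2 + 2) (p.2 + k + 1) q.1 (q.1 + q.2 + 2) (q.2 + k + 1) h
        (by rw [show (Finset.Icc 1 q.1 ∪ Finset.Icc (q.1+q.2+2) (q.2+k+1)) = F q from rfl,
          show (Finset.Icc 1 p.1 ∪ Finset.Icc (p.1+p.2+2) (p.2+k+1)) = F p from rfl, hcp, hcq])
    · exact ws_symm (ws_aux q.1 (q.1 + q.2 + 2) (q.2 + k + 1) p.1 (p.1 + p.2 + 2) (p.2 + k + 1)
        (le_of_lt h)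
        (by rw [show (Finset.Icc 1 p.1 ∪ Finset.Icc (p.1+p.2+2) (p.2+k+1)) = F p from rfl,
          show (Finset.Icc 1 q.1 ∪ Finset.Icc (q.1+q.2+2) (q.2+k+1)) = F q from rfl, hcp, hcq]))
  · rw [Finset.card_image_of_injOn hinj, hS, Finset.card_insert_of_notMem, Finset.card_product,
      Finset.card_range, Finset.card_range]
    simp [Finset.mem_product]
end

section
/- Let 𝒞 be a maximal collection of pairwise weakly separated k-element subsets of {1,…,n}. Suppose i < s < j < t are elements of {1,…,n} and I ⊆ {1,…,n} ∖ {i,s,j,t} with |I| = k − 2, such that I∪{i,s}, I∪{s,j}, I∪{j,t}, I∪{i,t} all belong to 𝒞. Then exactly one of I∪{i,j} and I∪{s,t} belongs to 𝒞. -/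
/-- `I` is a `k`-element subset of `{1,…,n}`. -/
def IsKSubset (n k : ℕ) (I : Finset ℕ) : Prop := I ⊆ Finset.Icc 1 n ∧ I.card = k

/-- `𝒞` is a maximal collection of pairwise weakly separated `k`-subsets of `{1,…,n}`:
every member is a `k`-subset of `{1,…,n}`, any two members are weakly separated, and
any `k`-subset of `{1,…,n}` weakly separated from all members already belongs to `𝒞`. -/
def MaximalWS (n k : ℕ) (𝒞 : Finset (Finset ℕ)) : Prop :=
  (∀ I ∈ 𝒞, IsKSubset n k I) ∧
  (∀ I ∈ 𝒞, ∀ J ∈ 𝒞, WeaklySeparated I J) ∧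
  (∀ J, IsKSubset n k J → (∀ I ∈ 𝒞, WeaklySeparated I J) → J ∈ 𝒞)

def Alt (X Y : Finset ℕ) : Prop :=
  ∃ a ∈ X, ∃ b ∈ Y, ∃ c ∈ X, ∃ d ∈ Y, a < b ∧ b < c ∧ c < d

def Cross (X Y : Finset ℕ) : Prop := Alt (X \ Y) (Y \ X) ∨ Alt (Y \ X) (X \ Y)

lemma not_ws_of_cross {X Y : Finset ℕ} (h : Cross X Y) : ¬ WeaklySeparated X Y := by
  intro hws
  rcases hws with ⟨-, P₁, P₂, -, hun, hp1, hp2⟩ | ⟨-, P₁, P₂, -, hun, hp1, hp2⟩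
  · rcases h with ⟨a,ha,b,hb,c,hc,d,hd,o1,o2,o3⟩ | ⟨a,ha,b,hb,c,hc,d,hd,o1,o2,o3⟩
    · rw [← hun] at hb
      rcases Finset.mem_union.mp hb with hb' | hb'
      · exact absurd (hp1 b hb' a ha) (by omega)
      · exact absurd (hp2 c hc b hb') (by omega)
    · rw [← hun] at hc
      rcases Finset.mem_union.mp hc with hc' | hc'
      · exact absurd (hp1 c hc' b hb) (by omega)
      · exact absurd (hp2 d hd c hc') (by omega)
  · rcases h with ⟨a,ha,b,hb,c,hc,d,hd,o1,o2,o3⟩ | ⟨a,ha,b,hb,c,hc,d,hd,o1,o2,o3⟩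
    · rw [← hun] at hc
      rcases Finset.mem_union.mp hc with hc' | hc'
      · exact absurd (hp1 c hc' b hb) (by omega)
      · exact absurd (hp2 d hd c hc') (by omega)
    · rw [← hun] at hb
      rcases Finset.mem_union.mp hb with hb' | hb'
      · exact absurd (hp1 b hb' a ha) (by omega)
      · exact absurd (hp2 c hc b hb') (by omega)

lemma exists_split (X Y : Finset ℕ) (hd : Disjoint X Y)
    (h : ∀ y ∈ Y, ∀ x₁ ∈ X, ∀ x₂ ∈ X, x₁ < y → y < x₂ → False) :
    ∃ Y₁ Y₂ : Finset ℕ, Disjoint Y₁ Y₂ ∧ Y₁ ∪ Y₂ = Y ∧ Prec Y₁ X ∧ Prec X Y₂ := by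
  classical
  refine ⟨Y.filter (fun y => ∀ x ∈ X, y < x), Y.filter (fun y => ¬ ∀ x ∈ X, y < x),
    Finset.disjoint_filter_filter_not Y Y _, Finset.filter_union_filter_not_eq _ Y, ?_, ?_⟩
  · intro y hy x hx
    exact (Finset.mem_filter.mp hy).2 x hx
  · intro x hx y hy
    obtain ⟨hyY, hny⟩ := Finset.mem_filter.mp hy
    push_neg at hny
    obtain ⟨x', hx', hle⟩ := hny
    have hne : x' ≠ y := fun e => Finset.disjoint_left.mp hd hx' (e ▸ hyY)
    have hne2 : x ≠ y := fun e => Finset.disjoint_left.mp hd hx (e ▸ hyY)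
    by_contra hxy
    exact h y hyY x' hx' x hx (by omega) (by omega)

lemma cross_of_not_ws {X Y : Finset ℕ} (hcard : X.card = Y.card) (h : ¬ WeaklySeparated X Y) :
    Cross X Y := by
  have hd1 : Disjoint (X \ Y) (Y \ X) := disjoint_sdiff_sdiff
  have h1 : ¬ ∃ P₁ P₂ : Finset ℕ, Disjoint P₁ P₂ ∧ P₁ ∪ P₂ = Y \ X ∧
      Prec P₁ (X \ Y) ∧ Prec (X \ Y) P₂ :=
    fun ⟨P₁, P₂, a, b, c, d⟩ => h (Or.inl ⟨le_of_eq hcard.symm, P₁, P₂, a, b, c, d⟩)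
  have h2 : ¬ ∃ P₁ P₂ : Finset ℕ, Disjoint P₁ P₂ ∧ P₁ ∪ P₂ = X \ Y ∧
      Prec P₁ (Y \ X) ∧ Prec (Y \ X) P₂ :=
    fun ⟨P₁, P₂, a, b, c, d⟩ => h (Or.inr ⟨le_of_eq hcard, P₁, P₂, a, b, c, d⟩)
  have e1 : ∃ y ∈ Y \ X, ∃ x₁ ∈ X \ Y, ∃ x₂ ∈ X \ Y, x₁ < y ∧ y < x₂ := by
    by_contra hc
    refine h1 (exists_split (X \ Y) (Y \ X) hd1 ?_)
    intro y hy x₁ hx₁ x₂ hx₂ l1 l2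
    exact hc ⟨y, hy, x₁, hx₁, x₂, hx₂, l1, l2⟩
  have e2 : ∃ y ∈ X \ Y, ∃ x₁ ∈ Y \ X, ∃ x₂ ∈ Y \ X, x₁ < y ∧ y < x₂ := by
    by_contra hc
    refine h2 (exists_split (Y \ X) (X \ Y) hd1.symm ?_)
    intro y hy x₁ hx₁ x₂ hx₂ l1 l2
    exact hc ⟨y, hy, x₁, hx₁, x₂, hx₂, l1, l2⟩
  obtain ⟨b, hb, a, ha, c, hc, hab, hbc⟩ := e1
  obtain ⟨a', ha', b', hb', d', hd', h1', h2'⟩ := e2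
  have hne : a' ≠ b := fun e => (Finset.mem_sdiff.mp ha').2 (e ▸ (Finset.mem_sdiff.mp hb).1)
  rcases lt_trichotomy a' b with hlt | heq | hlt
  · exact Or.inr ⟨b', hb', a', ha', b, hb, c, hc, h1', hlt, hbc⟩
  · exact absurd heq hne
  · rcases lt_or_ge a' c with hlt2 | hle
    · exact Or.inl ⟨a, ha, b, hb, a', ha', d', hd', hab, hlt, h2'⟩
    · exact Or.inl ⟨a, ha, b, hb, c, hc, d', hd', hab, hbc, by omega⟩

lemma mem_ns {I A : Finset ℕ} {p q x : ℕ} (h : x ∈ I ∨ x = p ∨ x = q) (hA : x ∉ A) :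
    x ∈ (I ∪ {p, q}) \ A := by
  rw [Finset.mem_sdiff, Finset.mem_union, Finset.mem_insert, Finset.mem_singleton]
  exact ⟨h, hA⟩

lemma mem_sn {I A : Finset ℕ} {p q x : ℕ} (hA : x ∈ A) (hI : x ∉ I) (hp : x ≠ p) (hq : x ≠ q) :
    x ∈ A \ (I ∪ {p, q}) := by
  rw [Finset.mem_sdiff, Finset.mem_union, Finset.mem_insert, Finset.mem_singleton]
  exact ⟨hA, by tauto⟩

lemma unmem_ns {I A : Finset ℕ} {p q x : ℕ} (h : x ∈ (I ∪ {p, q}) \ A) :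
    (x ∈ I ∨ x = p ∨ x = q) ∧ x ∉ A := by
  rw [Finset.mem_sdiff, Finset.mem_union, Finset.mem_insert, Finset.mem_singleton] at h
  exact h

lemma unmem_sn {I A : Finset ℕ} {p q x : ℕ} (h : x ∈ A \ (I ∪ {p, q})) :
    x ∈ A ∧ x ∉ I ∧ x ≠ p ∧ x ≠ q := by
  rw [Finset.mem_sdiff, Finset.mem_union, Finset.mem_insert, Finset.mem_singleton] at h
  obtain ⟨h1, h2⟩ := h
  push_neg at h2
  exact ⟨h1, h2.1, h2.2⟩

lemma alt1 {A N : Finset ℕ} (h : ¬ Cross A N) {a b c d : ℕ}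
    (ha : a ∈ A \ N) (hb : b ∈ N \ A) (hc : c ∈ A \ N) (hd : d ∈ N \ A)
    (o1 : a < b) (o2 : b < c) (o3 : c < d) : False :=
  h (Or.inl ⟨a, ha, b, hb, c, hc, d, hd, o1, o2, o3⟩)

lemma alt2 {A N : Finset ℕ} (h : ¬ Cross A N) {a b c d : ℕ}
    (ha : a ∈ N \ A) (hb : b ∈ A \ N) (hc : c ∈ N \ A) (hd : d ∈ A \ N)
    (o1 : a < b) (o2 : b < c) (o3 : c < d) : False :=
  h (Or.inr ⟨a, ha, b, hb, c, hc, d, hd, o1, o2, o3⟩)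

lemma orA {XI : Prop} {x a b c : ℕ} (h : XI ∨ x = a ∨ x = b) (hne : x ≠ b) :
    XI ∨ x = a ∨ x = c := by
  rcases h with h|h|h
  · exact Or.inl h
  · exact Or.inr (Or.inl h)
  · exact absurd h hne

lemma orB {XI : Prop} {x a b c : ℕ} (h : XI ∨ x = a ∨ x = b) (hne : x ≠ a) :
    XI ∨ x = b ∨ x = c := by
  rcases h with h|h|h
  · exact Or.inl h
  · exact absurd h hne
  · exact Or.inr (Or.inl h)

lemma orC {XI : Prop} {x a b c : ℕ} (h : XI ∨ x = a ∨ x = b) (hne : x ≠ a) :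
    XI ∨ x = c ∨ x = b := by
  rcases h with h|h|h
  · exact Or.inl h
  · exact absurd h hne
  · exact Or.inr (Or.inr h)

lemma orD {XI : Prop} {x a b c : ℕ} (h : XI ∨ x = a ∨ x = b) (hne : x ≠ b) :
    XI ∨ x = c ∨ x = a := by
  rcases h with h|h|h
  · exact Or.inl h
  · exact Or.inr (Or.inr h)
  · exact absurd h hne

lemma coreA (i s j t : ℕ) (his : i < s) (hsj : s < j) (hjt : j < t)
    (I A : Finset ℕ) (hiI : i ∉ I) (hsI : s ∉ I) (hjI : j ∉ I) (htI : t ∉ I)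
    (h1 : ¬ Cross A (I ∪ {i, s})) (h2 : ¬ Cross A (I ∪ {s, j}))
    (h3 : ¬ Cross A (I ∪ {j, t})) (h4 : ¬ Cross A (I ∪ {i, t}))
    (hK : Cross A (I ∪ {i, j})) :
    i ∉ A ∧ j ∉ A ∧ s ∈ A ∧ t ∈ A := by
  obtain ⟨u₁, u₂, v₁, v₂, hu1, hu2, hv1, hv2, ord⟩ :
      ∃ u₁ u₂ v₁ v₂ : ℕ,
        ((u₁ ∈ I ∨ u₁ = i ∨ u₁ = j) ∧ u₁ ∉ A) ∧
        ((u₂ ∈ I ∨ u₂ = i ∨ u₂ = j) ∧ u₂ ∉ A) ∧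
        (v₁ ∈ A ∧ v₁ ∉ I ∧ v₁ ≠ i ∧ v₁ ≠ j) ∧
        (v₂ ∈ A ∧ v₂ ∉ I ∧ v₂ ≠ i ∧ v₂ ≠ j) ∧
        ((v₁ < u₁ ∧ u₁ < v₂ ∧ v₂ < u₂) ∨ (u₁ < v₁ ∧ v₁ < u₂ ∧ u₂ < v₂)) := by
    rcases hK with ⟨a, ha, b, hb, c, hc, d, hd, o1, o2, o3⟩ | ⟨a, ha, b, hb, c, hc, d, hd, o1, o2, o3⟩
    · exact ⟨b, d, a, c, unmem_ns hb, unmem_ns hd, unmem_sn ha, unmem_sn hc, Or.inl ⟨o1, o2, o3⟩⟩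
    · exact ⟨a, c, b, d, unmem_ns ha, unmem_ns hc, unmem_sn hb, unmem_sn hd, Or.inr ⟨o1, o2, o3⟩⟩
  obtain ⟨hu1m, hu1A⟩ := hu1
  obtain ⟨hu2m, hu2A⟩ := hu2
  obtain ⟨hv1A, hv1I, hv1i, hv1j⟩ := hv1
  obtain ⟨hv2A, hv2I, hv2i, hv2j⟩ := hv2
  have huu : u₁ < u₂ := by rcases ord with ⟨o1,o2,o3⟩|⟨o1,o2,o3⟩ <;> omega
  have hvv : v₁ < v₂ := by rcases ord with ⟨o1,o2,o3⟩|⟨o1,o2,o3⟩ <;> omega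
  have c1 : (u₁ = j ∨ u₂ = j) ∨ (v₁ = s ∨ v₂ = s) := by
    by_contra hcon
    push_neg at hcon
    obtain ⟨⟨n1, n2⟩, n3, n4⟩ := hcon
    have m1 := mem_ns (I := I) (A := A) (orA (c := s) hu1m n1) hu1A
    have m2 := mem_ns (I := I) (A := A) (orA (c := s) hu2m n2) hu2A
    have m3 := mem_sn hv1A hv1I hv1i n3
    have m4 := mem_sn hv2A hv2I hv2i n4
    rcases ord with ⟨o1,o2,o3⟩|⟨o1,o2,o3⟩
    · exact alt1 h1 m3 m1 m4 m2 o1 o2 o3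
    · exact alt2 h1 m1 m3 m2 m4 o1 o2 o3
  have c2 : (u₁ = i ∨ u₂ = i) ∨ (v₁ = s ∨ v₂ = s) := by
    by_contra hcon
    push_neg at hcon
    obtain ⟨⟨n1, n2⟩, n3, n4⟩ := hcon
    have m1 := mem_ns (I := I) (A := A) (orC (c := s) hu1m n1) hu1A
    have m2 := mem_ns (I := I) (A := A) (orC (c := s) hu2m n2) hu2A
    have m3 := mem_sn hv1A hv1I n3 hv1j
    have m4 := mem_sn hv2A hv2I n4 hv2j
    rcases ord with ⟨o1,o2,o3⟩|⟨o1,o2,o3⟩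
    · exact alt1 h2 m3 m1 m4 m2 o1 o2 o3
    · exact alt2 h2 m1 m3 m2 m4 o1 o2 o3
  have c3 : (u₁ = i ∨ u₂ = i) ∨ (v₁ = t ∨ v₂ = t) := by
    by_contra hcon
    push_neg at hcon
    obtain ⟨⟨n1, n2⟩, n3, n4⟩ := hcon
    have m1 := mem_ns (I := I) (A := A) (orB (c := t) hu1m n1) hu1A
    have m2 := mem_ns (I := I) (A := A) (orB (c := t) hu2m n2) hu2A
    have m3 := mem_sn hv1A hv1I hv1j n3
    have m4 := mem_sn hv2A hv2I hv2j n4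
    rcases ord with ⟨o1,o2,o3⟩|⟨o1,o2,o3⟩
    · exact alt1 h3 m3 m1 m4 m2 o1 o2 o3
    · exact alt2 h3 m1 m3 m2 m4 o1 o2 o3
  have c4 : (u₁ = j ∨ u₂ = j) ∨ (v₁ = t ∨ v₂ = t) := by
    by_contra hcon
    push_neg at hcon
    obtain ⟨⟨n1, n2⟩, n3, n4⟩ := hcon
    have m1 := mem_ns (I := I) (A := A) (orA (c := t) hu1m n1) hu1A
    have m2 := mem_ns (I := I) (A := A) (orA (c := t) hu2m n2) hu2A
    have m3 := mem_sn hv1A hv1I hv1i n3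
    have m4 := mem_sn hv2A hv2I hv2i n4
    rcases ord with ⟨o1,o2,o3⟩|⟨o1,o2,o3⟩
    · exact alt1 h4 m3 m1 m4 m2 o1 o2 o3
    · exact alt2 h4 m1 m3 m2 m4 o1 o2 o3
  have main : ((u₁ = i ∨ u₂ = i) ∧ (u₁ = j ∨ u₂ = j)) ∨
      ((v₁ = s ∨ v₂ = s) ∧ (v₁ = t ∨ v₂ = t)) := by
    by_cases hs1 : v₁ = s ∨ v₂ = s
    · by_cases ht1 : v₁ = t ∨ v₂ = t
      · exact Or.inr ⟨hs1, ht1⟩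
      · exact Or.inl ⟨c3.resolve_right ht1, c4.resolve_right ht1⟩
    · exact Or.inl ⟨c2.resolve_right hs1, c1.resolve_right hs1⟩
  rcases main with ⟨hiu, hju⟩ | ⟨hsv, htv⟩
  · have hei : u₁ = i := by rcases hiu with h|h <;> rcases hju with h'|h' <;> omega
    have hej : u₂ = j := by rcases hiu with h|h <;> rcases hju with h'|h' <;> omega
    subst hei; subst hej
    refine ⟨hu1A, hu2A, ?_, ?_⟩
    · by_contra hsA
      have hv1s : v₁ ≠ s := fun e => hsA (e ▸ hv1A)
      have hv2s : v₂ ≠ s := fun e => hsA (e ▸ hv2A)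
      rcases ord with ⟨o1,o2,o3⟩|⟨o1,o2,o3⟩
      · rcases hv2s.lt_or_gt with hlt | hlt
        · exact alt1 h1 (mem_sn hv1A hv1I hv1i hv1s) (mem_ns (Or.inr (Or.inl rfl)) hu1A)
            (mem_sn hv2A hv2I hv2i hv2s) (mem_ns (Or.inr (Or.inr rfl)) hsA) o1 o2 hlt
        · exact alt1 h2 (mem_sn hv1A hv1I hv1s hv1j) (mem_ns (Or.inr (Or.inl rfl)) hsA)
            (mem_sn hv2A hv2I hv2s hv2j) (mem_ns (Or.inr (Or.inr rfl)) hu2A) (by omega) hlt o3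
      · rcases hv1s.lt_or_gt with hlt | hlt
        · exact alt2 h1 (mem_ns (Or.inr (Or.inl rfl)) hu1A) (mem_sn hv1A hv1I hv1i hv1s)
            (mem_ns (Or.inr (Or.inr rfl)) hsA) (mem_sn hv2A hv2I hv2i hv2s) o1 hlt (by omega)
        · exact alt2 h2 (mem_ns (Or.inr (Or.inl rfl)) hsA) (mem_sn hv1A hv1I hv1s hv1j)
            (mem_ns (Or.inr (Or.inr rfl)) hu2A) (mem_sn hv2A hv2I hv2s hv2j) hlt o2 o3
    · by_contra htA
      have hv1t : v₁ ≠ t := fun e => htA (e ▸ hv1A)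
      have hv2t : v₂ ≠ t := fun e => htA (e ▸ hv2A)
      rcases ord with ⟨o1,o2,o3⟩|⟨o1,o2,o3⟩
      · exact alt1 h4 (mem_sn hv1A hv1I hv1i hv1t) (mem_ns (Or.inr (Or.inl rfl)) hu1A)
          (mem_sn hv2A hv2I hv2i hv2t) (mem_ns (Or.inr (Or.inr rfl)) htA) o1 o2 (by omega)
      · rcases hv2t.lt_or_gt with hlt | hlt
        · exact alt1 h3 (mem_sn hv1A hv1I hv1j hv1t) (mem_ns (Or.inr (Or.inl rfl)) hu2A)
            (mem_sn hv2A hv2I hv2j hv2t) (mem_ns (Or.inr (Or.inr rfl)) htA) o2 o3 hlt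
        · exact alt2 h4 (mem_ns (Or.inr (Or.inl rfl)) hu1A) (mem_sn hv1A hv1I hv1i hv1t)
            (mem_ns (Or.inr (Or.inr rfl)) htA) (mem_sn hv2A hv2I hv2i hv2t) o1 (by omega) hlt
  · have hes : v₁ = s := by rcases hsv with h|h <;> rcases htv with h'|h' <;> omega
    have het : v₂ = t := by rcases hsv with h|h <;> rcases htv with h'|h' <;> omega
    subst hes; subst het
    refine ⟨?_, ?_, hv1A, hv2A⟩
    · by_contra hiA
      have hu1i : u₁ ≠ i := fun e => hu1A (e ▸ hiA)
      have hu2i : u₂ ≠ i := fun e => hu2A (e ▸ hiA)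
      rcases ord with ⟨o1,o2,o3⟩|⟨o1,o2,o3⟩
      · exact alt1 h2 (mem_sn hiA hiI (by omega) (by omega))
          (mem_ns (orC hu1m hu1i) hu1A)
          (mem_sn hv2A hv2I (by omega) hv2j)
          (mem_ns (orC hu2m hu2i) hu2A) (by omega) o2 o3
      · rcases hu1i.lt_or_gt with hlt | hlt
        · exact alt2 h2 (mem_ns (orC hu1m hu1i) hu1A)
            (mem_sn hiA hiI (by omega) (by omega))
            (mem_ns (orC hu2m hu2i) hu2A)
            (mem_sn hv2A hv2I (by omega) hv2j) hlt (by omega) o3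
        · exact alt1 h3 (mem_sn hiA hiI (by omega) (by omega))
            (mem_ns (orB hu1m hu1i) hu1A)
            (mem_sn hv1A hv1I hv1j (by omega))
            (mem_ns (orB hu2m hu2i) hu2A) hlt o1 o2
    · by_contra hjA
      have hu1j : u₁ ≠ j := fun e => hu1A (e ▸ hjA)
      have hu2j : u₂ ≠ j := fun e => hu2A (e ▸ hjA)
      rcases ord with ⟨o1,o2,o3⟩|⟨o1,o2,o3⟩
      · rcases hu1j.lt_or_gt with hlt | hlt
        · exact alt1 h4 (mem_sn hv1A hv1I (by omega) (by omega))
            (mem_ns (orA hu1m hu1j) hu1A)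
            (mem_sn hjA hjI (by omega) (by omega))
            (mem_ns (orA hu2m hu2j) hu2A) o1 hlt (by omega)
        · exact alt1 h1 (mem_sn hjA hjI (by omega) (by omega))
            (mem_ns (orA hu1m hu1j) hu1A)
            (mem_sn hv2A hv2I (by omega) (by omega))
            (mem_ns (orA hu2m hu2j) hu2A) hlt o2 o3
      · rcases hu2j.lt_or_gt with hlt | hlt
        · exact alt2 h4 (mem_ns (orA hu1m hu1j) hu1A)
            (mem_sn hv1A hv1I (by omega) (by omega))
            (mem_ns (orA hu2m hu2j) hu2A)
            (mem_sn hjA hjI (by omega) (by omega)) o1 o2 hlt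
        · exact alt2 h1 (mem_ns (orA hu1m hu1j) hu1A)
            (mem_sn hjA hjI (by omega) (by omega))
            (mem_ns (orA hu2m hu2j) hu2A)
            (mem_sn hv2A hv2I (by omega) (by omega)) (by omega) hlt o3

lemma coreB (i s j t : ℕ) (his : i < s) (hsj : s < j) (hjt : j < t)
    (I A : Finset ℕ) (hiI : i ∉ I) (hsI : s ∉ I) (hjI : j ∉ I) (htI : t ∉ I)
    (h1 : ¬ Cross A (I ∪ {i, s})) (h2 : ¬ Cross A (I ∪ {s, j}))
    (h3 : ¬ Cross A (I ∪ {j, t})) (h4 : ¬ Cross A (I ∪ {i, t}))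
    (hL : Cross A (I ∪ {s, t})) :
    i ∈ A ∧ j ∈ A ∧ s ∉ A ∧ t ∉ A := by
  obtain ⟨u₁, u₂, v₁, v₂, hu1, hu2, hv1, hv2, ord⟩ :
      ∃ u₁ u₂ v₁ v₂ : ℕ,
        ((u₁ ∈ I ∨ u₁ = s ∨ u₁ = t) ∧ u₁ ∉ A) ∧
        ((u₂ ∈ I ∨ u₂ = s ∨ u₂ = t) ∧ u₂ ∉ A) ∧
        (v₁ ∈ A ∧ v₁ ∉ I ∧ v₁ ≠ s ∧ v₁ ≠ t) ∧
        (v₂ ∈ A ∧ v₂ ∉ I ∧ v₂ ≠ s ∧ v₂ ≠ t) ∧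
        ((v₁ < u₁ ∧ u₁ < v₂ ∧ v₂ < u₂) ∨ (u₁ < v₁ ∧ v₁ < u₂ ∧ u₂ < v₂)) := by
    rcases hL with ⟨a, ha, b, hb, c, hc, d, hd, o1, o2, o3⟩ | ⟨a, ha, b, hb, c, hc, d, hd, o1, o2, o3⟩
    · exact ⟨b, d, a, c, unmem_ns hb, unmem_ns hd, unmem_sn ha, unmem_sn hc, Or.inl ⟨o1, o2, o3⟩⟩
    · exact ⟨a, c, b, d, unmem_ns ha, unmem_ns hc, unmem_sn hb, unmem_sn hd, Or.inr ⟨o1, o2, o3⟩⟩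
  obtain ⟨hu1m, hu1A⟩ := hu1
  obtain ⟨hu2m, hu2A⟩ := hu2
  obtain ⟨hv1A, hv1I, hv1s, hv1t⟩ := hv1
  obtain ⟨hv2A, hv2I, hv2s, hv2t⟩ := hv2
  have huu : u₁ < u₂ := by rcases ord with ⟨o1,o2,o3⟩|⟨o1,o2,o3⟩ <;> omega
  have hvv : v₁ < v₂ := by rcases ord with ⟨o1,o2,o3⟩|⟨o1,o2,o3⟩ <;> omega
  have c1 : (u₁ = t ∨ u₂ = t) ∨ (v₁ = i ∨ v₂ = i) := by
    by_contra hcon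
    push_neg at hcon
    obtain ⟨⟨n1, n2⟩, n3, n4⟩ := hcon
    have m1 := mem_ns (I := I) (A := A) (orD (c := i) hu1m n1) hu1A
    have m2 := mem_ns (I := I) (A := A) (orD (c := i) hu2m n2) hu2A
    have m3 := mem_sn hv1A hv1I n3 hv1s
    have m4 := mem_sn hv2A hv2I n4 hv2s
    rcases ord with ⟨o1,o2,o3⟩|⟨o1,o2,o3⟩
    · exact alt1 h1 m3 m1 m4 m2 o1 o2 o3
    · exact alt2 h1 m1 m3 m2 m4 o1 o2 o3
  have c2 : (u₁ = t ∨ u₂ = t) ∨ (v₁ = j ∨ v₂ = j) := by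
    by_contra hcon
    push_neg at hcon
    obtain ⟨⟨n1, n2⟩, n3, n4⟩ := hcon
    have m1 := mem_ns (I := I) (A := A) (orA (c := j) hu1m n1) hu1A
    have m2 := mem_ns (I := I) (A := A) (orA (c := j) hu2m n2) hu2A
    have m3 := mem_sn hv1A hv1I hv1s n3
    have m4 := mem_sn hv2A hv2I hv2s n4
    rcases ord with ⟨o1,o2,o3⟩|⟨o1,o2,o3⟩
    · exact alt1 h2 m3 m1 m4 m2 o1 o2 o3
    · exact alt2 h2 m1 m3 m2 m4 o1 o2 o3
  have c3 : (u₁ = s ∨ u₂ = s) ∨ (v₁ = j ∨ v₂ = j) := by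
    by_contra hcon
    push_neg at hcon
    obtain ⟨⟨n1, n2⟩, n3, n4⟩ := hcon
    have m1 := mem_ns (I := I) (A := A) (orC (c := j) hu1m n1) hu1A
    have m2 := mem_ns (I := I) (A := A) (orC (c := j) hu2m n2) hu2A
    have m3 := mem_sn hv1A hv1I n3 hv1t
    have m4 := mem_sn hv2A hv2I n4 hv2t
    rcases ord with ⟨o1,o2,o3⟩|⟨o1,o2,o3⟩
    · exact alt1 h3 m3 m1 m4 m2 o1 o2 o3
    · exact alt2 h3 m1 m3 m2 m4 o1 o2 o3
  have c4 : (u₁ = s ∨ u₂ = s) ∨ (v₁ = i ∨ v₂ = i) := by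
    by_contra hcon
    push_neg at hcon
    obtain ⟨⟨n1, n2⟩, n3, n4⟩ := hcon
    have m1 := mem_ns (I := I) (A := A) (orC (c := i) hu1m n1) hu1A
    have m2 := mem_ns (I := I) (A := A) (orC (c := i) hu2m n2) hu2A
    have m3 := mem_sn hv1A hv1I n3 hv1t
    have m4 := mem_sn hv2A hv2I n4 hv2t
    rcases ord with ⟨o1,o2,o3⟩|⟨o1,o2,o3⟩
    · exact alt1 h4 m3 m1 m4 m2 o1 o2 o3
    · exact alt2 h4 m1 m3 m2 m4 o1 o2 o3
  have main : ((u₁ = s ∨ u₂ = s) ∧ (u₁ = t ∨ u₂ = t)) ∨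
      ((v₁ = i ∨ v₂ = i) ∧ (v₁ = j ∨ v₂ = j)) := by
    by_cases hi1 : v₁ = i ∨ v₂ = i
    · by_cases hj1 : v₁ = j ∨ v₂ = j
      · exact Or.inr ⟨hi1, hj1⟩
      · exact Or.inl ⟨c3.resolve_right hj1, c2.resolve_right hj1⟩
    · exact Or.inl ⟨c4.resolve_right hi1, c1.resolve_right hi1⟩
  rcases main with ⟨hsu, htu⟩ | ⟨hiv, hjv⟩
  · have hes : u₁ = s := by rcases hsu with h|h <;> rcases htu with h'|h' <;> omega
    have het : u₂ = t := by rcases hsu with h|h <;> rcases htu with h'|h' <;> omega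
    subst hes; subst het
    refine ⟨?_, ?_, hu1A, hu2A⟩
    · by_contra hiA
      have hv1i : v₁ ≠ i := fun e => hiA (e ▸ hv1A)
      have hv2i : v₂ ≠ i := fun e => hiA (e ▸ hv2A)
      rcases ord with ⟨o1,o2,o3⟩|⟨o1,o2,o3⟩
      · rcases hv1i.lt_or_gt with hlt | hlt
        · exact alt1 h4 (mem_sn hv1A hv1I hv1i hv1t) (mem_ns (Or.inr (Or.inl rfl)) hiA)
            (mem_sn hv2A hv2I hv2i hv2t) (mem_ns (Or.inr (Or.inr rfl)) hu2A) hlt (by omega) o3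
        · exact alt2 h1 (mem_ns (Or.inr (Or.inl rfl)) hiA) (mem_sn hv1A hv1I hv1i hv1s)
            (mem_ns (Or.inr (Or.inr rfl)) hu1A) (mem_sn hv2A hv2I hv2i hv2s) hlt o1 o2
      · exact alt2 h4 (mem_ns (Or.inr (Or.inl rfl)) hiA) (mem_sn hv1A hv1I hv1i hv1t)
          (mem_ns (Or.inr (Or.inr rfl)) hu2A) (mem_sn hv2A hv2I hv2i hv2t) (by omega) o2 o3
    · by_contra hjA
      have hv1j : v₁ ≠ j := fun e => hjA (e ▸ hv1A)
      have hv2j : v₂ ≠ j := fun e => hjA (e ▸ hv2A)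
      rcases ord with ⟨o1,o2,o3⟩|⟨o1,o2,o3⟩
      · rcases hv2j.lt_or_gt with hlt | hlt
        · exact alt1 h2 (mem_sn hv1A hv1I hv1s hv1j) (mem_ns (Or.inr (Or.inl rfl)) hu1A)
            (mem_sn hv2A hv2I hv2s hv2j) (mem_ns (Or.inr (Or.inr rfl)) hjA) o1 o2 hlt
        · exact alt1 h3 (mem_sn hv1A hv1I hv1j hv1t) (mem_ns (Or.inr (Or.inl rfl)) hjA)
            (mem_sn hv2A hv2I hv2j hv2t) (mem_ns (Or.inr (Or.inr rfl)) hu2A) (by omega) hlt o3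
      · rcases hv1j.lt_or_gt with hlt | hlt
        · exact alt2 h2 (mem_ns (Or.inr (Or.inl rfl)) hu1A) (mem_sn hv1A hv1I hv1s hv1j)
            (mem_ns (Or.inr (Or.inr rfl)) hjA) (mem_sn hv2A hv2I hv2s hv2j) o1 hlt (by omega)
        · exact alt2 h3 (mem_ns (Or.inr (Or.inl rfl)) hjA) (mem_sn hv1A hv1I hv1j hv1t)
            (mem_ns (Or.inr (Or.inr rfl)) hu2A) (mem_sn hv2A hv2I hv2j hv2t) hlt o2 o3
  · have hei : v₁ = i := by rcases hiv with h|h <;> rcases hjv with h'|h' <;> omega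
    have hej : v₂ = j := by rcases hiv with h|h <;> rcases hjv with h'|h' <;> omega
    subst hei; subst hej
    refine ⟨hv1A, hv2A, ?_, ?_⟩
    · intro hsA
      have hu1s : u₁ ≠ s := fun e => hu1A (e ▸ hsA)
      have hu2s : u₂ ≠ s := fun e => hu2A (e ▸ hsA)
      rcases ord with ⟨o1,o2,o3⟩|⟨o1,o2,o3⟩
      · rcases hu1s.lt_or_gt with hlt | hlt
        · exact alt1 h3 (mem_sn hv1A hv1I (by omega) (by omega))
            (mem_ns (orC (c := v₂) hu1m hu1s) hu1A)
            (mem_sn hsA hsI (by omega) (by omega))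
            (mem_ns (orC (c := v₂) hu2m hu2s) hu2A) o1 hlt (by omega)
        · exact alt1 h4 (mem_sn hsA hsI (by omega) (by omega))
            (mem_ns (orC (c := v₁) hu1m hu1s) hu1A)
            (mem_sn hv2A hv2I (by omega) (by omega))
            (mem_ns (orC (c := v₁) hu2m hu2s) hu2A) hlt o2 o3
      · rcases hu2s.lt_or_gt with hlt | hlt
        · exact alt2 h3 (mem_ns (orC (c := v₂) hu1m hu1s) hu1A)
            (mem_sn hv1A hv1I (by omega) (by omega))
            (mem_ns (orC (c := v₂) hu2m hu2s) hu2A)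
            (mem_sn hsA hsI (by omega) (by omega)) o1 o2 hlt
        · exact alt2 h4 (mem_ns (orC (c := v₁) hu1m hu1s) hu1A)
            (mem_sn hsA hsI (by omega) (by omega))
            (mem_ns (orC (c := v₁) hu2m hu2s) hu2A)
            (mem_sn hv2A hv2I (by omega) (by omega)) (by omega) hlt o3
    · intro htA
      have hu1t : u₁ ≠ t := fun e => hu1A (e ▸ htA)
      have hu2t : u₂ ≠ t := fun e => hu2A (e ▸ htA)
      rcases ord with ⟨o1,o2,o3⟩|⟨o1,o2,o3⟩
      · rcases hu2t.lt_or_gt with hlt | hlt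
        · exact alt2 h1 (mem_ns (orD (c := v₁) hu1m hu1t) hu1A)
            (mem_sn hv2A hv2I (by omega) (by omega))
            (mem_ns (orD (c := v₁) hu2m hu2t) hu2A)
            (mem_sn htA htI (by omega) (by omega)) o2 o3 hlt
        · exact alt1 h2 (mem_sn hv1A hv1I (by omega) (by omega))
            (mem_ns (orA (c := v₂) hu1m hu1t) hu1A)
            (mem_sn htA htI (by omega) (by omega))
            (mem_ns (orA (c := v₂) hu2m hu2t) hu2A) o1 (by omega) hlt
      · exact alt2 h2 (mem_ns (orA (c := v₂) hu1m hu1t) hu1A)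
          (mem_sn hv1A hv1I (by omega) (by omega))
          (mem_ns (orA (c := v₂) hu2m hu2t) hu2A)
          (mem_sn htA htI (by omega) (by omega)) o1 o2 (by omega)

/-- **Theorem 3, first part.** In a maximal collection `𝒞` of pairwise weakly separated
`k`-subsets of `{1,…,n}` containing `I∪{i,s}`, `I∪{s,j}`, `I∪{j,t}`, `I∪{i,t}` for
`i < s < j < t`, exactly one of `I∪{i,j}` and `I∪{s,t}` belongs to `𝒞`. -/
theorem exactly_one_of_move (n k : ℕ) (𝒞 : Finset (Finset ℕ)) (hmax : MaximalWS n k 𝒞)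
    (i s j t : ℕ)
    (hi : i ∈ Finset.Icc 1 n) (hs : s ∈ Finset.Icc 1 n)
    (hj : j ∈ Finset.Icc 1 n) (ht : t ∈ Finset.Icc 1 n)
    (his : i < s) (hsj : s < j) (hjt : j < t)
    (I : Finset ℕ) (hI : I ⊆ Finset.Icc 1 n \ {i, s, j, t}) (hIc : I.card = k - 2)
    (m₁ : I ∪ {i, s} ∈ 𝒞) (m₂ : I ∪ {s, j} ∈ 𝒞)
    (m₃ : I ∪ {j, t} ∈ 𝒞) (m₄ : I ∪ {i, t} ∈ 𝒞) :
    Xor' (I ∪ {i, j} ∈ 𝒞) (I ∪ {s, t} ∈ 𝒞) := by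
  obtain ⟨hmem, hpair, hmaximal⟩ := hmax
  have hIg : ∀ x ∈ I, x ∈ Finset.Icc 1 n ∧ x ≠ i ∧ x ≠ s ∧ x ≠ j ∧ x ≠ t := by
    intro x hx
    have h' := hI hx
    rw [Finset.mem_sdiff] at h'
    refine ⟨h'.1, ?_⟩
    have h2 := h'.2
    simp only [Finset.mem_insert, Finset.mem_singleton] at h2
    push_neg at h2
    exact h2
  have hiI : i ∉ I := fun h => (hIg i h).2.1 rfl
  have hsI : s ∉ I := fun h => (hIg s h).2.2.1 rfl
  have hjI : j ∉ I := fun h => (hIg j h).2.2.2.1 rfl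
  have htI : t ∉ I := fun h => (hIg t h).2.2.2.2 rfl
  have cardIU : ∀ p q : ℕ, p ∉ I → q ∉ I → p ≠ q → (I ∪ {p, q}).card = I.card + 2 := by
    intro p q hp hq hpq
    have hd : Disjoint I ({p, q} : Finset ℕ) := by
      rw [Finset.disjoint_right]
      intro x hx
      simp only [Finset.mem_insert, Finset.mem_singleton] at hx
      rcases hx with rfl | rfl
      exacts [hp, hq]
    rw [Finset.card_union_of_disjoint hd]
    congr 1
    rw [Finset.card_insert_of_notMem (by simp [hpq]), Finset.card_singleton]
  have hk2 : I.card + 2 = k := by rw [← (hmem _ m₁).2, cardIU i s hiI hsI (by omega)]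
  have cardK : (I ∪ {i, j}).card = k := by rw [cardIU i j hiI hjI (by omega)]; exact hk2
  have cardL : (I ∪ {s, t}).card = k := by rw [cardIU s t hsI htI (by omega)]; exact hk2
  have hsubK : I ∪ {i, j} ⊆ Finset.Icc 1 n := by
    intro x hx
    rcases Finset.mem_union.mp hx with hx | hx
    · exact (hIg x hx).1
    · simp only [Finset.mem_insert, Finset.mem_singleton] at hx
      rcases hx with rfl | rfl
      exacts [hi, hj]
  have hsubL : I ∪ {s, t} ⊆ Finset.Icc 1 n := by
    intro x hx
    rcases Finset.mem_union.mp hx with hx | hx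
    · exact (hIg x hx).1
    · simp only [Finset.mem_insert, Finset.mem_singleton] at hx
      rcases hx with rfl | rfl
      exacts [hs, ht]
  have crossKL : Cross (I ∪ {i, j}) (I ∪ {s, t}) := by
    refine Or.inl ⟨i, mem_ns (Or.inr (Or.inl rfl)) ?_, s, mem_ns (Or.inr (Or.inl rfl)) ?_,
      j, mem_ns (Or.inr (Or.inr rfl)) ?_, t, mem_ns (Or.inr (Or.inr rfl)) ?_, his, hsj, hjt⟩
    · simp only [Finset.mem_union, Finset.mem_insert, Finset.mem_singleton]
      push_neg
      exact ⟨hiI, by omega, by omega⟩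
    · simp only [Finset.mem_union, Finset.mem_insert, Finset.mem_singleton]
      push_neg
      exact ⟨hsI, by omega, by omega⟩
    · simp only [Finset.mem_union, Finset.mem_insert, Finset.mem_singleton]
      push_neg
      exact ⟨hjI, by omega, by omega⟩
    · simp only [Finset.mem_union, Finset.mem_insert, Finset.mem_singleton]
      push_neg
      exact ⟨htI, by omega, by omega⟩
  have notboth : ¬ ((I ∪ {i, j}) ∈ 𝒞 ∧ (I ∪ {s, t}) ∈ 𝒞) :=
    fun ⟨hK, hL⟩ => not_ws_of_cross crossKL (hpair _ hK _ hL)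
  have key : (∀ A ∈ 𝒞, WeaklySeparated A (I ∪ {i, j})) ∨
      (∀ A ∈ 𝒞, WeaklySeparated A (I ∪ {s, t})) := by
    by_contra hcon
    push_neg at hcon
    obtain ⟨⟨A, hA, hAK⟩, B, hB, hBL⟩ := hcon
    have ncr : ∀ X ∈ 𝒞, ∀ N ∈ 𝒞, ¬ Cross X N :=
      fun X hX N hN hc => not_ws_of_cross hc (hpair _ hX _ hN)
    have cA : Cross A (I ∪ {i, j}) := cross_of_not_ws (by rw [(hmem A hA).2, cardK]) hAK
    obtain ⟨hiA, hjA, hsA, htA⟩ := coreA i s j t his hsj hjt I A hiI hsI hjI htI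
      (ncr A hA _ m₁) (ncr A hA _ m₂) (ncr A hA _ m₃) (ncr A hA _ m₄) cA
    have cB : Cross B (I ∪ {s, t}) := cross_of_not_ws (by rw [(hmem B hB).2, cardL]) hBL
    obtain ⟨hiB, hjB, hsB, htB⟩ := coreB i s j t his hsj hjt I B hiI hsI hjI htI
      (ncr B hB _ m₁) (ncr B hB _ m₂) (ncr B hB _ m₃) (ncr B hB _ m₄) cB
    exact not_ws_of_cross (Or.inr ⟨i, Finset.mem_sdiff.mpr ⟨hiB, hiA⟩, s,
      Finset.mem_sdiff.mpr ⟨hsA, hsB⟩, j, Finset.mem_sdiff.mpr ⟨hjB, hjA⟩, t,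
      Finset.mem_sdiff.mpr ⟨htA, htB⟩, his, hsj, hjt⟩) (hpair A hA B hB)
  rcases key with hP | hQ
  · have hKin : (I ∪ {i, j}) ∈ 𝒞 := hmaximal _ ⟨hsubK, cardK⟩ hP
    exact Or.inl ⟨hKin, fun hLin => notboth ⟨hKin, hLin⟩⟩
  · have hLin : (I ∪ {s, t}) ∈ 𝒞 := hmaximal _ ⟨hsubL, cardL⟩ hQ
    exact Or.inr ⟨hLin, fun hKin => notboth ⟨hKin, hLin⟩⟩
end

section
/- Let A, I be nonempty subsets of {1,…,k} and B, J nonempty subsets of {1,…,m} with |A| = |B| and |I| = |J|. If A∖I ≺ I∖A and J∖B ≺ B∖J, then the k-element subsets S(A,B) and S(I,J) of {1,…,k+m} are weakly separated. -/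
/-- `S(A,B) = {b + k : b ∈ B} ∪ ({1,…,k} ∖ {k+1−a : a ∈ A})`. -/
def SAB (k : ℕ) (A B : Finset ℕ) : Finset ℕ :=
  B.image (· + k) ∪ (Finset.Icc 1 k \ A.image fun a => k + 1 - a)

lemma card_SAB (k m : ℕ) (A B : Finset ℕ) (hA : A ⊆ Finset.Icc 1 k)
    (hB : B ⊆ Finset.Icc 1 m) (hAB : A.card = B.card) : (SAB k A B).card = k := by
  have hdisj : Disjoint (B.image (· + k)) (Finset.Icc 1 k \ A.image fun a => k + 1 - a) := by
    rw [Finset.disjoint_left]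
    rintro x hx hx'
    simp only [Finset.mem_image] at hx
    obtain ⟨b, hb, rfl⟩ := hx
    have hb1 := Finset.mem_Icc.mp (hB hb)
    have := Finset.mem_Icc.mp (Finset.mem_sdiff.mp hx').1
    omega
  have hsub : (A.image fun a => k + 1 - a) ⊆ Finset.Icc 1 k := by
    intro x hx
    simp only [Finset.mem_image] at hx
    obtain ⟨a, ha, rfl⟩ := hx
    have := Finset.mem_Icc.mp (hA ha)
    rw [Finset.mem_Icc]; omega
  have hcardA : (A.image fun a => k + 1 - a).card = A.card := by
    apply Finset.card_image_of_injOn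
    intro a ha b hb hab
    simp only at hab
    have := Finset.mem_Icc.mp (hA ha)
    have := Finset.mem_Icc.mp (hA hb)
    omega
  have hcardB : (B.image (· + k)).card = B.card :=
    Finset.card_image_of_injective _ (add_left_injective k)
  have hAk : A.card ≤ k := by
    calc A.card = (A.image fun a => k + 1 - a).card := hcardA.symm
    _ ≤ (Finset.Icc 1 k).card := Finset.card_le_card hsub
    _ = k := by simp
  rw [SAB, Finset.card_union_of_disjoint hdisj, Finset.card_sdiff_of_subset hsub,
    hcardA, hcardB, Nat.card_Icc]
  omega

lemma sdiff_SAB (k m : ℕ) (A B I J : Finset ℕ)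
    (hA : A ⊆ Finset.Icc 1 k) (hI : I ⊆ Finset.Icc 1 k)
    (hB : B ⊆ Finset.Icc 1 m) (hJ : J ⊆ Finset.Icc 1 m) :
    SAB k A B \ SAB k I J =
      (I \ A).image (fun a => k + 1 - a) ∪ (B \ J).image (· + k) := by
  ext x
  simp only [SAB, Finset.mem_sdiff, Finset.mem_union, Finset.mem_image, Finset.mem_Icc,
    not_or, not_exists, not_and, not_not]
  constructor
  · rintro ⟨hmem, hnJ, hnI⟩
    rcases hmem with ⟨b, hb, rfl⟩ | ⟨⟨hx1, hxk⟩, hnA⟩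
    · right
      refine ⟨b, ⟨hb, ?_⟩, rfl⟩
      intro hbJ
      have hb1 := Finset.mem_Icc.mp (hB hb)
      exact hnJ b hbJ rfl
    · left
      have hx' : ∃ i ∈ I, k + 1 - i = x := by
        by_contra hcon
        push_neg at hcon
        exact (hnI ⟨hx1, hxk⟩ |>.elim) fun i hi hix => hcon i hi hix
      obtain ⟨i, hi, rfl⟩ := hx'
      refine ⟨i, ⟨hi, fun hiA => hnA i hiA rfl⟩, rfl⟩
  · rintro (⟨i, ⟨hi, hiA⟩, rfl⟩ | ⟨b, ⟨hb, hbJ⟩, rfl⟩)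
    · have hik := Finset.mem_Icc.mp (hI hi)
      refine ⟨Or.inr ⟨⟨by omega, by omega⟩, ?_⟩, ?_, ?_⟩
      · intro a ha hax
        have := Finset.mem_Icc.mp (hA ha)
        have : a = i := by omega
        exact hiA (this ▸ ha)
      · intro j hj
        have := Finset.mem_Icc.mp (hJ hj)
        omega
      · intro _ h
        exact h i hi rfl
    · have hbm := Finset.mem_Icc.mp (hB hb)
      refine ⟨Or.inl ⟨b, hb, rfl⟩, ?_, ?_⟩
      · intro j hj hjx
        have : j = b := by omega
        exact hbJ (this ▸ hj)
      · intro h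
        omega

/-- If `A∖I ≺ I∖A` and `J∖B ≺ B∖J` then the `k`-subsets `S(A,B)` and `S(I,J)` of
`{1,…,k+m}` are weakly separated. -/
theorem weaklySeparated_of_prec (k m : ℕ) (A I B J : Finset ℕ)
    (hA : A ⊆ Finset.Icc 1 k) (hI : I ⊆ Finset.Icc 1 k)
    (hB : B ⊆ Finset.Icc 1 m) (hJ : J ⊆ Finset.Icc 1 m)
    (hAne : A.Nonempty) (hIne : I.Nonempty)
    (hAB : A.card = B.card) (hIJ : I.card = J.card)
    (h₁ : Prec (A \ I) (I \ A)) (h₂ : Prec (J \ B) (B \ J)) :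
    WeaklySeparated (SAB k A B) (SAB k I J) := by
  right
  refine ⟨by rw [card_SAB k m A B hA hB hAB, card_SAB k m I J hI hJ hIJ], ?_⟩
  refine ⟨(I \ A).image (fun a => k + 1 - a), (B \ J).image (· + k), ?_, ?_, ?_, ?_⟩
  · rw [Finset.disjoint_left]
    rintro x hx hx'
    simp only [Finset.mem_image] at hx hx'
    obtain ⟨i, hi, rfl⟩ := hx
    obtain ⟨b, hb, hbx⟩ := hx'
    have := Finset.mem_Icc.mp (hI (Finset.mem_sdiff.mp hi).1)
    have := Finset.mem_Icc.mp (hB (Finset.mem_sdiff.mp hb).1)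
    omega
  · exact (sdiff_SAB k m A B I J hA hI hB hJ).symm
  · rw [sdiff_SAB k m I J A B hI hA hJ hB]
    intro x hx y hy
    simp only [Finset.mem_image, Finset.mem_union, Finset.mem_sdiff] at hx hy
    obtain ⟨i, ⟨hi, hiA⟩, rfl⟩ := hx
    have hik := Finset.mem_Icc.mp (hI hi)
    rcases hy with ⟨a, ⟨ha, haI⟩, rfl⟩ | ⟨j, ⟨hj, hjB⟩, rfl⟩
    · have hak := Finset.mem_Icc.mp (hA ha)
      have := h₁ a (Finset.mem_sdiff.mpr ⟨ha, haI⟩) i (Finset.mem_sdiff.mpr ⟨hi, hiA⟩)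
      omega
    · have := Finset.mem_Icc.mp (hJ hj)
      omega
  · rw [sdiff_SAB k m I J A B hI hA hJ hB]
    intro x hx y hy
    simp only [Finset.mem_image, Finset.mem_union, Finset.mem_sdiff] at hx hy
    obtain ⟨b, ⟨hb, hbJ⟩, rfl⟩ := hy
    have hbm := Finset.mem_Icc.mp (hB hb)
    rcases hx with ⟨a, ⟨ha, haI⟩, rfl⟩ | ⟨j, ⟨hj, hjB⟩, rfl⟩
    · have := Finset.mem_Icc.mp (hA ha)
      omega
    · have := h₂ j (Finset.mem_sdiff.mpr ⟨hj, hjB⟩) b (Finset.mem_sdiff.mpr ⟨hb, hbJ⟩)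
      omega
end

section
/- Let n ≥ 2 and let 𝒞 and ℬ be two maximal collections of pairwise weakly separated 2-element subsets of {1,…,n}. Then there is a finite sequence of (2,4)-moves transforming 𝒞 into ℬ. -/
/-- `𝒞'` is obtained from `𝒞` by a `(2,4)`-move. -/
def Move24 (n k : ℕ) (𝒞 𝒞' : Finset (Finset ℕ)) : Prop :=
  ∃ i s j t : ℕ, ∃ I : Finset ℕ,
    i ∈ Finset.Icc 1 n ∧ s ∈ Finset.Icc 1 n ∧ j ∈ Finset.Icc 1 n ∧ t ∈ Finset.Icc 1 n ∧
    i < s ∧ s < j ∧ j < t ∧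
    I ⊆ Finset.Icc 1 n \ {i, s, j, t} ∧ I.card = k - 2 ∧
    I ∪ {i, s} ∈ 𝒞 ∧ I ∪ {s, j} ∈ 𝒞 ∧ I ∪ {j, t} ∈ 𝒞 ∧ I ∪ {i, t} ∈ 𝒞 ∧
    ((I ∪ {i, j} ∈ 𝒞 ∧ 𝒞' = insert (I ∪ {s, t}) (𝒞.erase (I ∪ {i, j}))) ∨
     (I ∪ {s, t} ∈ 𝒞 ∧ 𝒞' = insert (I ∪ {i, j}) (𝒞.erase (I ∪ {s, t}))))

/-- crossing of two chords `{a,b}`, `{c,d}` with `a<b`, `c<d`. -/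
def Cr (a b c d : ℕ) : Prop := (a < c ∧ c < b ∧ b < d) ∨ (c < a ∧ a < d ∧ d < b)

lemma Cr_symm {a b c d : ℕ} : Cr a b c d ↔ Cr c d a b := by unfold Cr; tauto

lemma pair_card {a b : ℕ} (h : a ≠ b) : ({a, b} : Finset ℕ).card = 2 := by
  rw [Finset.card_insert_of_notMem (by simp [h]), Finset.card_singleton]

lemma ws_iff {a b c d : ℕ} (hab : a < b) (hcd : c < d) :
    WeaklySeparated {a, b} {c, d} ↔ ¬ Cr a b c d := by
  constructor
  · rintro (⟨-, J₁, J₂, hdisj, huni, hp1, hp2⟩ | ⟨-, J₁, J₂, hdisj, huni, hp1, hp2⟩) hcr <;>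
      rcases hcr with ⟨h1, h2, h3⟩ | ⟨h1, h2, h3⟩
    · -- disjunct 1, a<c<b<d : use c
      have hc : c ∈ J₁ ∪ J₂ := by rw [huni]; simp; omega
      have hb : b ∈ ({a, b} : Finset ℕ) \ {c, d} := by simp; omega
      have ha : a ∈ ({a, b} : Finset ℕ) \ {c, d} := by simp; omega
      rcases Finset.mem_union.1 hc with h | h
      · have := hp1 c h a ha; omega
      · have := hp2 b hb c h; omega
    · -- disjunct 1, c<a<d<b : use d
      have hc : d ∈ J₁ ∪ J₂ := by rw [huni]; simp; omega
      have hb : b ∈ ({a, b} : Finset ℕ) \ {c, d} := by simp; omega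
      have ha : a ∈ ({a, b} : Finset ℕ) \ {c, d} := by simp; omega
      rcases Finset.mem_union.1 hc with h | h
      · have := hp1 d h a ha; omega
      · have := hp2 b hb d h; omega
    · -- disjunct 2, a<c<b<d : use b
      have hb : b ∈ J₁ ∪ J₂ := by rw [huni]; simp; omega
      have hcm : c ∈ ({c, d} : Finset ℕ) \ {a, b} := by simp; omega
      have hdm : d ∈ ({c, d} : Finset ℕ) \ {a, b} := by simp; omega
      rcases Finset.mem_union.1 hb with h | h
      · have := hp1 b h c hcm; omega
      · have := hp2 d hdm b h; omega
    · -- disjunct 2, c<a<d<b : use a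
      have hb : a ∈ J₁ ∪ J₂ := by rw [huni]; simp; omega
      have hcm : c ∈ ({c, d} : Finset ℕ) \ {a, b} := by simp; omega
      have hdm : d ∈ ({c, d} : Finset ℕ) \ {a, b} := by simp; omega
      rcases Finset.mem_union.1 hb with h | h
      · have := hp1 a h c hcm; omega
      · have := hp2 d hdm a h; omega
  · intro hncr
    have hP : (∀ y ∈ ({c, d} : Finset ℕ) \ {a, b}, a ≤ y →
          ∀ x ∈ ({a, b} : Finset ℕ) \ {c, d}, x < y) ∨
        (∀ y ∈ ({a, b} : Finset ℕ) \ {c, d}, c ≤ y →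
          ∀ x ∈ ({c, d} : Finset ℕ) \ {a, b}, x < y) := by
      by_contra h
      push_neg at h
      obtain ⟨⟨y, hy, hay, x, hx, hxy⟩, ⟨y', hy', hay', x', hx', hxy'⟩⟩ := h
      simp only [Finset.mem_sdiff, Finset.mem_insert, Finset.mem_singleton] at hy hx hy' hx'
      unfold Cr at hncr
      omega
    rcases hP with hP | hP
    · left
      refine ⟨by rw [pair_card hab.ne, pair_card hcd.ne],
        (({c, d} : Finset ℕ) \ {a, b}).filter (· < a),
        (({c, d} : Finset ℕ) \ {a, b}).filter (fun y => ¬ y < a), ?_, ?_, ?_, ?_⟩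
      · exact Finset.disjoint_filter_filter_not _ _ _
      · exact Finset.filter_union_filter_not_eq _ _
      · intro x hx y hy
        simp only [Finset.mem_filter] at hx
        simp only [Finset.mem_sdiff, Finset.mem_insert, Finset.mem_singleton] at hy
        omega
      · intro x hx y hy
        simp only [Finset.mem_filter, not_lt] at hy
        exact hP y hy.1 hy.2 x hx
    · right
      refine ⟨by rw [pair_card hab.ne, pair_card hcd.ne],
        (({a, b} : Finset ℕ) \ {c, d}).filter (· < c),
        (({a, b} : Finset ℕ) \ {c, d}).filter (fun y => ¬ y < c), ?_, ?_, ?_, ?_⟩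
      · exact Finset.disjoint_filter_filter_not _ _ _
      · exact Finset.filter_union_filter_not_eq _ _
      · intro x hx y hy
        simp only [Finset.mem_filter] at hx
        simp only [Finset.mem_sdiff, Finset.mem_insert, Finset.mem_singleton] at hy
        omega
      · intro x hx y hy
        simp only [Finset.mem_filter, not_lt] at hy
        exact hP y hy.1 hy.2 x hx

lemma pair_inj {a b c d : ℕ} (hab : a < b) (hcd : c < d)
    (h : ({a, b} : Finset ℕ) = {c, d}) : a = c ∧ b = d := by
  simp only [Finset.ext_iff, Finset.mem_insert, Finset.mem_singleton] at h
  have ha := h a; have hb := h b; have hc := h c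
  simp at ha hb hc; omega

section Struct
variable {n : ℕ} {𝒞 : Finset (Finset ℕ)}

lemma pair_isK {a b : ℕ} (ha : 1 ≤ a) (hab : a < b) (hb : b ≤ n) :
    IsKSubset n 2 {a, b} := by
  refine ⟨?_, pair_card hab.ne⟩
  intro x hx
  simp only [Finset.mem_insert, Finset.mem_singleton] at hx
  simp only [Finset.mem_Icc]
  omega

lemma isK_rep {J : Finset ℕ} (h : IsKSubset n 2 J) :
    ∃ a b, 1 ≤ a ∧ a < b ∧ b ≤ n ∧ J = {a, b} := by
  obtain ⟨hsub, hcard⟩ := h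
  obtain ⟨x, y, hxy, rfl⟩ := Finset.card_eq_two.1 hcard
  have hx := Finset.mem_Icc.1 (hsub (Finset.mem_insert_self x {y}))
  have hy := Finset.mem_Icc.1 (hsub (by simp : y ∈ ({x, y} : Finset ℕ)))
  rcases lt_or_gt_of_ne hxy with h | h
  · exact ⟨x, y, hx.1, h, hy.2, rfl⟩
  · exact ⟨y, x, hy.1, h, hx.2, Finset.pair_comm x y⟩

lemma mem_pair_rep (h𝒞 : MaximalWS n 2 𝒞) {M : Finset ℕ} (hM : M ∈ 𝒞) :
    ∃ a b, 1 ≤ a ∧ a < b ∧ b ≤ n ∧ M = {a, b} := isK_rep (h𝒞.1 M hM)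

lemma not_cr_of_mem (h𝒞 : MaximalWS n 2 𝒞) {a b c d : ℕ} (hab : a < b) (hcd : c < d)
    (h1 : ({a, b} : Finset ℕ) ∈ 𝒞) (h2 : ({c, d} : Finset ℕ) ∈ 𝒞) : ¬ Cr a b c d :=
  (ws_iff hab hcd).1 (h𝒞.2.1 _ h1 _ h2)

lemma mem_pair_bounds (h𝒞 : MaximalWS n 2 𝒞) {c d : ℕ} (hcd : c < d)
    (hm : ({c, d} : Finset ℕ) ∈ 𝒞) : 1 ≤ c ∧ d ≤ n := by
  obtain ⟨c', d', hc', hcd', hd', heq⟩ := mem_pair_rep h𝒞 hm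
  have := pair_inj hcd hcd' heq
  omega

lemma mem_of_compat (h𝒞 : MaximalWS n 2 𝒞) {a b : ℕ} (ha : 1 ≤ a) (hab : a < b) (hb : b ≤ n)
    (h : ∀ c d, c < d → ({c, d} : Finset ℕ) ∈ 𝒞 → ¬ Cr c d a b) :
    ({a, b} : Finset ℕ) ∈ 𝒞 := by
  refine h𝒞.2.2 _ (pair_isK ha hab hb) ?_
  intro M hM
  obtain ⟨c, d, hc, hcd, hd, rfl⟩ := mem_pair_rep h𝒞 hM
  exact (ws_iff hcd hab).2 (h c d hcd hM)

lemma adj_mem (h𝒞 : MaximalWS n 2 𝒞) {a : ℕ} (ha : 1 ≤ a) (han : a + 1 ≤ n) :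
    ({a, a + 1} : Finset ℕ) ∈ 𝒞 := by
  refine mem_of_compat h𝒞 ha (by omega) han ?_
  intro c d hcd hm hcr
  unfold Cr at hcr; omega

lemma one_n_mem (h𝒞 : MaximalWS n 2 𝒞) (hn : 2 ≤ n) : ({1, n} : Finset ℕ) ∈ 𝒞 := by
  refine mem_of_compat h𝒞 le_rfl (by omega) le_rfl ?_
  intro c d hcd hm hcr
  have := mem_pair_bounds h𝒞 hcd hm
  unfold Cr at hcr; omega

/-- number of edges at vertex 1 -/
def deg (n : ℕ) (𝒞 : Finset (Finset ℕ)) : ℕ :=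
  ((Finset.Icc 2 n).filter (fun v => ({1, v} : Finset ℕ) ∈ 𝒞)).card

lemma progress (hn : 2 ≤ n) (h𝒞 : MaximalWS n 2 𝒞) {u : ℕ} (hu2 : 2 ≤ u) (hun : u ≤ n)
    (hu : ({1, u} : Finset ℕ) ∉ 𝒞) :
    ∃ 𝒞', Move24 n 2 𝒞 𝒞' ∧ Move24 n 2 𝒞' 𝒞 ∧ MaximalWS n 2 𝒞' ∧ deg n 𝒞 < deg n 𝒞' := by
  classical
  have h12 : ({1, 2} : Finset ℕ) ∈ 𝒞 := by
    have := adj_mem h𝒞 (a := 1) le_rfl (by omega)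
    norm_num at this; exact this
  have h1n : ({1, n} : Finset ℕ) ∈ 𝒞 := one_n_mem h𝒞 hn
  -- g : least v with {1,v} ∉ 𝒞
  set S : Finset ℕ := (Finset.Icc 2 n).filter (fun v => ({1, v} : Finset ℕ) ∉ 𝒞) with hS
  have hSne : S.Nonempty := ⟨u, Finset.mem_filter.2 ⟨Finset.mem_Icc.2 ⟨hu2, hun⟩, hu⟩⟩
  set g := S.min' hSne with hgdef
  have hgS : g ∈ S := Finset.min'_mem _ _
  rw [hS, Finset.mem_filter, Finset.mem_Icc] at hgS
  obtain ⟨⟨hg2, hgn⟩, hgnot⟩ := hgS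
  have hglow : ∀ v, 2 ≤ v → v < g → ({1, v} : Finset ℕ) ∈ 𝒞 := by
    intro v h1 h2
    by_contra h
    have : g ≤ v := Finset.min'_le _ _ (Finset.mem_filter.2 ⟨Finset.mem_Icc.2 ⟨h1, by omega⟩, h⟩)
    omega
  have hg3 : 3 ≤ g := by
    by_contra h
    have : g = 2 := by omega
    rw [this] at hgnot; exact hgnot h12
  have hgn' : g < n := by
    have : g ≠ n := fun h => hgnot (h ▸ h1n)
    omega
  set s := g - 1 with hsdef
  have hs2 : 2 ≤ s := by omega
  have h1s : ({1, s} : Finset ℕ) ∈ 𝒞 := hglow s hs2 (by omega)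
  -- t : least v ≥ g with {1,v} ∈ 𝒞
  set T : Finset ℕ := (Finset.Icc g n).filter (fun v => ({1, v} : Finset ℕ) ∈ 𝒞) with hT
  have hTne : T.Nonempty := ⟨n, Finset.mem_filter.2 ⟨Finset.mem_Icc.2 ⟨by omega, le_rfl⟩, h1n⟩⟩
  set t := T.min' hTne with htdef
  have htT : t ∈ T := Finset.min'_mem _ _
  rw [hT, Finset.mem_filter, Finset.mem_Icc] at htT
  obtain ⟨⟨hgt', htn⟩, h1t⟩ := htT
  have hgt : g < t := by
    have : g ≠ t := fun h => hgnot (h ▸ h1t)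
    omega
  have hgap : ∀ v, s < v → v < t → ({1, v} : Finset ℕ) ∉ 𝒞 := by
    intro v h1 h2 hmem
    have hvg : g ≤ v := by omega
    have : t ≤ v := Finset.min'_le _ _ (Finset.mem_filter.2 ⟨Finset.mem_Icc.2 ⟨hvg, by omega⟩, hmem⟩)
    omega
  have hst : s < t := by omega
  have hst2 : s + 2 ≤ t := by omega
  -- the edge {s,t}
  have hstm : ({s, t} : Finset ℕ) ∈ 𝒞 := by
    refine mem_of_compat h𝒞 (by omega) hst htn ?_
    intro c d hcd hm hcr
    have hbd := mem_pair_bounds h𝒞 hcd hm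
    rcases hcr with ⟨h1, h2, h3⟩ | ⟨h1, h2, h3⟩
    · rcases Nat.lt_or_ge 1 c with hc1 | hc1
      · exact not_cr_of_mem h𝒞 (show 1 < s by omega) hcd h1s hm (Or.inl ⟨hc1, h1, h2⟩)
      · have : c = 1 := by omega
        subst this
        exact hgap d h2 h3 hm
    · exact not_cr_of_mem h𝒞 (show 1 < t by omega) hcd h1t hm (Or.inl ⟨by omega, h2, h3⟩)
  -- j : largest v in (s,t) with {s,v} ∈ 𝒞
  set U : Finset ℕ := (Finset.Ioo s t).filter (fun v => ({s, v} : Finset ℕ) ∈ 𝒞) with hU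
  have hUne : U.Nonempty :=
    ⟨s + 1, Finset.mem_filter.2 ⟨Finset.mem_Ioo.2 ⟨by omega, by omega⟩,
      adj_mem h𝒞 (by omega) (by omega)⟩⟩
  set j := U.max' hUne with hjdef
  have hjU : j ∈ U := Finset.max'_mem _ _
  rw [hU, Finset.mem_filter, Finset.mem_Ioo] at hjU
  obtain ⟨⟨hsj, hjt⟩, hsjm⟩ := hjU
  have hjmax : ∀ v, s < v → v < t → ({s, v} : Finset ℕ) ∈ 𝒞 → v ≤ j := by
    intro v h1 h2 h3
    exact Finset.le_max' _ _ (Finset.mem_filter.2 ⟨Finset.mem_Ioo.2 ⟨h1, h2⟩, h3⟩)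
  -- the edge {j,t}
  have hjtm : ({j, t} : Finset ℕ) ∈ 𝒞 := by
    refine mem_of_compat h𝒞 (by omega) hjt htn ?_
    intro c d hcd hm hcr
    have hbd := mem_pair_bounds h𝒞 hcd hm
    rcases hcr with ⟨h1, h2, h3⟩ | ⟨h1, h2, h3⟩
    · rcases lt_trichotomy c s with hcs | hcs | hcs
      · exact not_cr_of_mem h𝒞 hst hcd hstm hm (Or.inr ⟨hcs, by omega, h3⟩)
      · subst hcs
        have := hjmax d (by omega) h3 hm; omega
      · exact not_cr_of_mem h𝒞 hsj hcd hsjm hm (Or.inl ⟨hcs, h1, h2⟩)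
    · exact not_cr_of_mem h𝒞 hst hcd hstm hm (Or.inl ⟨by omega, h2, h3⟩)
  have h1j_not : ({1, j} : Finset ℕ) ∉ 𝒞 := hgap j (by omega) hjt
  have h1j : 1 < j := by omega
  -- compatibility of the new edge {1,j} with everything except {s,t}
  have hcompat : ∀ c d, c < d → ({c, d} : Finset ℕ) ∈ 𝒞 → ({c, d} : Finset ℕ) ≠ {s, t} →
      ¬ Cr 1 j c d := by
    intro c d hcd hm hne hcr
    have hbd := mem_pair_bounds h𝒞 hcd hm
    rcases hcr with ⟨h1, h2, h3⟩ | ⟨h1, h2, h3⟩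
    · rcases lt_trichotomy c s with hcs | hcs | hcs
      · exact not_cr_of_mem h𝒞 (show 1 < s by omega) hcd h1s hm (Or.inl ⟨h1, hcs, by omega⟩)
      · subst hcs
        rcases lt_trichotomy d t with hdt | hdt | hdt
        · have := hjmax d (by omega) hdt hm; omega
        · exact hne (by rw [hdt])
        · exact not_cr_of_mem h𝒞 (show 1 < t by omega) hcd h1t hm
            (Or.inl ⟨by omega, by omega, hdt⟩)
      · exact not_cr_of_mem h𝒞 hsj hcd hsjm hm (Or.inl ⟨hcs, h2, h3⟩)
    · omega
  -- the new collection
  set 𝒞' := insert ({1, j} : Finset ℕ) (𝒞.erase {s, t}) with h𝒞'def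
  have hmem' : ∀ M ∈ 𝒞, M ≠ ({s, t} : Finset ℕ) → M ∈ 𝒞' := fun M h1 h2 =>
    Finset.mem_insert_of_mem (Finset.mem_erase.2 ⟨h2, h1⟩)
  have h1j' : ({1, j} : Finset ℕ) ∈ 𝒞' := Finset.mem_insert_self _ _
  have hne1 : ∀ x : ℕ, 1 < x → ({1, x} : Finset ℕ) ≠ {s, t} := by
    intro x hx h
    have := pair_inj hx hst h; omega
  have h1s' : ({1, s} : Finset ℕ) ∈ 𝒞' := hmem' _ h1s (hne1 s (by omega))
  have h1t' : ({1, t} : Finset ℕ) ∈ 𝒞' := hmem' _ h1t (hne1 t (by omega))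
  have hsj' : ({s, j} : Finset ℕ) ∈ 𝒞' := by
    refine hmem' _ hsjm fun h => ?_
    have := pair_inj hsj hst h; omega
  have hjt' : ({j, t} : Finset ℕ) ∈ 𝒞' := by
    refine hmem' _ hjtm fun h => ?_
    have := pair_inj hjt hst h; omega
  -- maximality of 𝒞'
  have hmax' : MaximalWS n 2 𝒞' := by
    refine ⟨?_, ?_, ?_⟩
    · intro M hM
      rcases Finset.mem_insert.1 hM with rfl | hM
      · exact pair_isK le_rfl h1j (by omega)
      · exact h𝒞.1 M (Finset.mem_of_mem_erase hM)
    · intro M hM N hN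
      rcases Finset.mem_insert.1 hM with rfl | hM <;> rcases Finset.mem_insert.1 hN with h' | hN
      · rw [h']
        exact (ws_iff h1j h1j).2 (by unfold Cr; omega)
      · obtain ⟨c, d, hc, hcd, hd, rfl⟩ := mem_pair_rep h𝒞 (Finset.mem_of_mem_erase hN)
        exact (ws_iff h1j hcd).2
          (hcompat c d hcd (Finset.mem_of_mem_erase hN) (Finset.mem_erase.1 hN).1)
      · rw [h']
        obtain ⟨c, d, hc, hcd, hd, rfl⟩ := mem_pair_rep h𝒞 (Finset.mem_of_mem_erase hM)
        exact (ws_iff hcd h1j).2 fun hcr =>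
          hcompat c d hcd (Finset.mem_of_mem_erase hM) (Finset.mem_erase.1 hM).1
            (Cr_symm.1 hcr)
      · exact h𝒞.2.1 _ (Finset.mem_of_mem_erase hM) _ (Finset.mem_of_mem_erase hN)
    · intro J hJ hWS
      obtain ⟨a, b, ha, hab, hb, rfl⟩ := isK_rep hJ
      have hn' : ∀ c d, c < d → ({c, d} : Finset ℕ) ∈ 𝒞' → ¬ Cr c d a b := fun c d h1 h2 =>
        (ws_iff h1 hab).1 (hWS _ h2)
      by_cases hcr : Cr s t a b
      · rcases hcr with ⟨h1, h2, h3⟩ | ⟨h1, h2, h3⟩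
        · exact absurd (Or.inl ⟨by omega, h2, h3⟩ : Cr 1 t a b)
            (hn' 1 t (by omega) h1t')
        · rcases Nat.lt_or_ge 1 a with ha1 | ha1
          · exact absurd (Or.inl ⟨ha1, h1, h2⟩ : Cr 1 s a b) (hn' 1 s (by omega) h1s')
          · have : a = 1 := by omega
            subst this
            rcases lt_trichotomy b j with hbj | hbj | hbj
            · exact absurd (Or.inr ⟨by omega, h2, hbj⟩ : Cr s j 1 b) (hn' s j hsj hsj')
            · rw [hbj]; exact h1j'
            · exact absurd (Or.inr ⟨by omega, hbj, h3⟩ : Cr j t 1 b) (hn' j t hjt hjt')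
      · have hmem𝒞 : ({a, b} : Finset ℕ) ∈ 𝒞 := by
          refine mem_of_compat h𝒞 ha hab hb ?_
          intro c d h1 h2
          by_cases he : ({c, d} : Finset ℕ) = {s, t}
          · obtain ⟨rfl, rfl⟩ : c = s ∧ d = t := pair_inj h1 hst he
            exact hcr
          · exact hn' c d h1 (hmem' _ h2 he)
        have hne : ({a, b} : Finset ℕ) ≠ {s, t} := by
          intro h
          obtain ⟨rfl, rfl⟩ : a = s ∧ b = t := pair_inj hab hst h
          exact hn' 1 j (by omega) h1j' (Or.inl ⟨by omega, hsj, hjt⟩)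
        exact hmem' _ hmem𝒞 hne
  -- degree increases
  have hdeg : deg n 𝒞 < deg n 𝒞' := by
    apply Finset.card_lt_card
    rw [Finset.ssubset_iff_of_subset]
    · exact ⟨j, Finset.mem_filter.2 ⟨Finset.mem_Icc.2 ⟨by omega, by omega⟩, h1j'⟩,
        fun h => h1j_not (Finset.mem_filter.1 h).2⟩
    · intro v hv
      rw [Finset.mem_filter, Finset.mem_Icc] at hv ⊢
      exact ⟨hv.1, hmem' _ hv.2 (hne1 v (by omega))⟩
  -- the two moves
  have hmv1 : Move24 n 2 𝒞 𝒞' := by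
    refine ⟨1, s, j, t, ∅, ?_, ?_, ?_, ?_, by omega, hsj, hjt, ?_, by simp, ?_, ?_, ?_, ?_,
      Or.inr ⟨?_, ?_⟩⟩
    · exact Finset.mem_Icc.2 ⟨le_rfl, by omega⟩
    · exact Finset.mem_Icc.2 ⟨by omega, by omega⟩
    · exact Finset.mem_Icc.2 ⟨by omega, by omega⟩
    · exact Finset.mem_Icc.2 ⟨by omega, htn⟩
    · exact Finset.empty_subset _
    · simpa using h1s
    · simpa using hsjm
    · simpa using hjtm
    · simpa using h1t
    · simpa using hstm
    · rw [h𝒞'def]; simp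
  have hmv2 : Move24 n 2 𝒞' 𝒞 := by
    refine ⟨1, s, j, t, ∅, ?_, ?_, ?_, ?_, by omega, hsj, hjt, ?_, by simp, ?_, ?_, ?_, ?_,
      Or.inl ⟨by simpa using h1j', ?_⟩⟩
    · exact Finset.mem_Icc.2 ⟨le_rfl, by omega⟩
    · exact Finset.mem_Icc.2 ⟨by omega, by omega⟩
    · exact Finset.mem_Icc.2 ⟨by omega, by omega⟩
    · exact Finset.mem_Icc.2 ⟨by omega, htn⟩
    · exact Finset.empty_subset _
    · simpa using h1s'
    · simpa using hsj'
    · simpa using hjt'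
    · simpa using h1t'
    · have h1 : ({1, j} : Finset ℕ) ∉ 𝒞.erase {s, t} := fun h =>
        h1j_not (Finset.mem_of_mem_erase h)
      simp only [Finset.empty_union]
      rw [h𝒞'def, Finset.erase_insert h1, Finset.insert_erase hstm]
  exact ⟨𝒞', hmv1, hmv2, hmax', hdeg⟩

end Struct

section Final
variable {n : ℕ}

lemma deg_le (𝒞 : Finset (Finset ℕ)) : deg n 𝒞 ≤ n - 1 := by
  have h := Finset.card_filter_le (Finset.Icc 2 n) (fun v => ({1, v} : Finset ℕ) ∈ 𝒞)
  rw [Nat.card_Icc] at h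
  unfold deg
  omega

lemma deg_lt {𝒞 : Finset (Finset ℕ)} {v : ℕ} (h1 : 2 ≤ v) (h2 : v ≤ n)
    (h3 : ({1, v} : Finset ℕ) ∉ 𝒞) : deg n 𝒞 < n - 1 := by
  have h := Finset.card_lt_card (s := (Finset.Icc 2 n).filter
      (fun w => ({1, w} : Finset ℕ) ∈ 𝒞)) (t := Finset.Icc 2 n) ?_
  · rw [Nat.card_Icc] at h
    unfold deg
    omega
  · rw [Finset.ssubset_iff_of_subset (Finset.filter_subset _ _)]
    exact ⟨v, Finset.mem_Icc.2 ⟨h1, h2⟩, fun h => h3 (Finset.mem_filter.1 h).2⟩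

lemma reach (hn : 2 ≤ n) :
    ∀ m (𝒞 : Finset (Finset ℕ)), MaximalWS n 2 𝒞 → n - 1 - deg n 𝒞 ≤ m →
      ∃ 𝒟, Relation.ReflTransGen (Move24 n 2) 𝒞 𝒟 ∧
        Relation.ReflTransGen (Move24 n 2) 𝒟 𝒞 ∧ MaximalWS n 2 𝒟 ∧
        ∀ v, 2 ≤ v → v ≤ n → ({1, v} : Finset ℕ) ∈ 𝒟 := by
  intro m
  induction m with
  | zero =>
    intro 𝒞 h𝒞 hb
    refine ⟨𝒞, .refl, .refl, h𝒞, ?_⟩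
    intro v h1 h2
    by_contra h
    have := deg_lt h1 h2 h
    omega
  | succ m ih =>
    intro 𝒞 h𝒞 hb
    by_cases hfull : ∀ v, 2 ≤ v → v ≤ n → ({1, v} : Finset ℕ) ∈ 𝒞
    · exact ⟨𝒞, .refl, .refl, h𝒞, hfull⟩
    · push_neg at hfull
      obtain ⟨v, h1, h2, h3⟩ := hfull
      obtain ⟨𝒞', m1, m2, hmax', hdeg⟩ := progress hn h𝒞 h1 h2 h3
      have hlt := deg_lt h1 h2 h3
      have hle := deg_le (n := n) 𝒞'
      obtain ⟨𝒟, p1, p2, h𝒟, hfull𝒟⟩ := ih 𝒞' hmax' (by omega)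
      exact ⟨𝒟, .head m1 p1, p2.tail m2, h𝒟, hfull𝒟⟩

lemma full_subset {𝒞 ℬ : Finset (Finset ℕ)} (h𝒞 : MaximalWS n 2 𝒞) (hℬ : MaximalWS n 2 ℬ)
    (hf𝒞 : ∀ v, 2 ≤ v → v ≤ n → ({1, v} : Finset ℕ) ∈ 𝒞)
    (hfℬ : ∀ v, 2 ≤ v → v ≤ n → ({1, v} : Finset ℕ) ∈ ℬ) : 𝒞 ⊆ ℬ := by
  intro M hM
  obtain ⟨a, b, ha, hab, hb, rfl⟩ := mem_pair_rep h𝒞 hM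
  rcases Nat.eq_or_lt_of_le ha with ha1 | ha1
  · rw [← ha1]
    exact hfℬ b (by omega) hb
  · have hba : b = a + 1 := by
      by_contra h
      have h1a : ({1, a + 1} : Finset ℕ) ∈ 𝒞 := hf𝒞 (a + 1) (by omega) (by omega)
      exact not_cr_of_mem h𝒞 (show 1 < a + 1 by omega) hab h1a hM
        (Or.inl ⟨by omega, by omega, by omega⟩)
    rw [hba]
    exact adj_mem hℬ (by omega) (by omega)

end Final

/-- **Transitivity for `k = 2`.** Any two maximal collections of pairwise weakly
separated `2`-subsets of `{1,…,n}` are connected by a finite sequence of `(2,4)`-moves. -/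
theorem transitivity_k2 (n : ℕ) (hn : 2 ≤ n) (𝒞 ℬ : Finset (Finset ℕ))
    (h𝒞 : MaximalWS n 2 𝒞) (hℬ : MaximalWS n 2 ℬ) :
    Relation.ReflTransGen (Move24 n 2) 𝒞 ℬ := by
  obtain ⟨𝒟₁, p1, _, h𝒟₁, hf₁⟩ := reach hn n 𝒞 h𝒞 (by omega)
  obtain ⟨𝒟₂, _, q2, h𝒟₂, hf₂⟩ := reach hn n ℬ hℬ (by omega)
  have heq : 𝒟₁ = 𝒟₂ :=
    Finset.Subset.antisymm (full_subset h𝒟₁ h𝒟₂ hf₁ hf₂) (full_subset h𝒟₂ h𝒟₁ hf₂ hf₁)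
  exact p1.trans (heq ▸ q2)
end
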